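/- arXiv:1911.10146 — 6 statements merged into one kernel-verified Lean document; each statement's English description precedes it below -/
import Mathlib

section
/- For integers n and k with 1 ≤ k ≤ n−1 and every integer t ≥ 0, the number of vectors y ∈ {0,1,…,t}^n with y_1 + ⋯ + y_n = k·t equals Σ_{j=0}^{k−1} (−1)^j · C(n,j) · C((k−j)t + n − 1 − j, n − 1), where C(a,b) denotes the binomial coefficient (the identity is an equality of integers). -/
open Finset Polynomial

/-- Number of lattice points of the `t`-th dilate of the hypersimplex `Δ_{k,n}`:
vectors `y ∈ {0,1,…,t}^n` with `y 0 + ⋯ + y (n-1) = k*t`. -/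
def latticeCount (n k t : ℕ) : ℕ :=
  ((Fintype.piFinset fun _ : Fin n => Finset.range (t + 1)).filter
    fun y => ∑ i, y i = k * t).card

/-- The weight of a linearly ordered block (given as a list): the number of its
entries that are strictly smaller than its first entry. -/
def blockWeight (b : List ℕ) : ℕ := b.countP fun x => decide (x < b.headI)

/-- `P` is a partition of `{1,…,n}` into `m` linearly ordered blocks: a set of `m`
nonempty duplicate-free lists, pairwise disjoint, whose entries cover `{1,…,n}`. -/
def IsLOPartition (n m : ℕ) (P : Finset (List ℕ)) : Prop :=
  P.card = m ∧
  (∀ b ∈ P, b ≠ [] ∧ b.Nodup) ∧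
  (∀ b ∈ P, ∀ c ∈ P, b ≠ c → ∀ x ∈ b, x ∉ c) ∧
  ∀ x : ℕ, (∃ b ∈ P, x ∈ b) ↔ x ∈ Finset.Icc 1 n

/-- The weight of a linearly ordered partition: sum of the weights of its blocks. -/
def partWeight (P : Finset (List ℕ)) : ℕ := ∑ b ∈ P, blockWeight b

/-- The Lah number `L(n,m)`: number of partitions of `{1,…,n}` into `m` linearly
ordered blocks. -/
noncomputable def lah (n m : ℕ) : ℕ := Nat.card {P : Finset (List ℕ) // IsLOPartition n m P}

/-- The weighted Lah number `W(ℓ,n,m)`: number of partitions of `{1,…,n}` into `m`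
linearly ordered blocks having weight `ℓ` (zero for negative `ℓ`). -/
noncomputable def weightedLah (ℓ : ℤ) (n m : ℕ) : ℕ :=
  Nat.card {P : Finset (List ℕ) // IsLOPartition n m P ∧ (partWeight P : ℤ) = ℓ}

/-- Unsigned Stirling number of the first kind `⟦a,b⟧`: number of permutations of a
set with `a` elements having exactly `b` cycles (fixed points count as cycles). -/
noncomputable def stirling1 (a b : ℕ) : ℕ :=
  Nat.card {σ : Equiv.Perm (Fin a) // σ.cycleType.card + (a - σ.support.card) = b}

/-- Unsigned Stirling number of the first kind with the convention that it vanishes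
on negative arguments. -/
noncomputable def stirlingZ (a b : ℤ) : ℤ :=
  if 0 ≤ a ∧ 0 ≤ b then stirling1 a.toNat b.toNat else 0

/-- Eulerian number `A(m,j)`: number of permutations of `{1,…,m}` with exactly `j`
descents, `A(0,0) = 1`. -/
def eulerian : ℕ → ℕ → ℕ
  | 0, 0 => 1
  | 0, _ + 1 => 0
  | _ + 1, 0 => 1
  | m + 1, j + 1 => (j + 2) * eulerian m (j + 1) + (m - j) * eulerian m j

/-- Katzman's formula: `E_{k,n}(t) = Σ_{j=0}^{k-1} (-1)^j C(n,j) binom((k-j)t+n-1-j, n-1)`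
as a polynomial in `t` over `ℚ`. -/
noncomputable def EhrhartHyp (k n : ℕ) : Polynomial ℚ :=
  (((n - 1).factorial : ℚ))⁻¹ • ∑ j ∈ Finset.range k,
    ((-1 : ℚ) ^ j * (n.choose j : ℚ)) •
      ∏ i ∈ Finset.Icc 1 (n - 1), (C ((k : ℚ) - (j : ℚ)) * X + C ((i : ℚ) - (j : ℚ)))

/-!
Lattice points of `t • Δ_{k,n}` are the compositions `y` of `k * t` into `n` parts with every
`y i ≤ t`. Inclusion–exclusion over the set `T` of coordinates with `y i > t`, followed by
subtracting `t + 1` from those coordinates, turns each term into the stars-and-bars count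
`C(k t - |T| (t + 1) + n - 1, n - 1)`, which is Katzman's summand for `j = |T|` and vanishes
once `j ≥ k`.
-/

namespace Finset

theorem card_filter_forall_not {α ι : Type*} [Fintype ι] (s : Finset α)
    (P : ι → α → Prop) [∀ i, DecidablePred (P i)] :
    (#{a ∈ s | ∀ i, ¬ P i a} : ℤ) =
      ∑ T : Finset ι, (-1 : ℤ) ^ #T * #{a ∈ s | ∀ i ∈ T, P i a} := by
  classical
  simp only [natCast_card_filter, mul_sum, ← powerset_univ]
  rw [sum_comm]
  refine sum_congr rfl fun a _ => ?_
  simp only [mul_ite, mul_one, mul_zero, ← sum_filter]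
  -- the surviving `T` are the subsets of `{i | P i a}`, whose signs cancel unless it is empty
  have hsub (T : Finset ι) : (∀ i ∈ T, P i a) ↔ T ⊆ ({i | P i a} : Finset ι) := by
    simp [subset_iff]
  simp only [hsub, powerset_univ, filter_subset_univ, sum_powerset_neg_one_pow_card]
  simp

namespace Nat

theorem card_antidiagonalTuple (n m : ℕ) :
    #(antidiagonalTuple n m) = (n + m - 1).choose m := by
  rw [card_eq_of_equiv_fintype ((Equiv.subtypeEquivRight fun _ => mem_antidiagonalTuple).trans
    (Sym.equivNatSumOfFintype (Fin n) m).symm), Sym.card_sym_eq_choose, Fintype.card_fin]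

theorem card_filter_le_antidiagonalTuple_add {n : ℕ} (c : Fin n → ℕ) (m : ℕ) :
    #{y ∈ antidiagonalTuple n (m + ∑ i, c i) | ∀ i, c i ≤ y i} =
      #(antidiagonalTuple n m) := by
  refine card_nbij' (· - c) (· + c) ?_ ?_ ?_ ?_
  · intro y hy
    simp only [coe_filter, mem_antidiagonalTuple] at hy
    simp only [mem_coe, mem_antidiagonalTuple, Pi.sub_apply]
    rw [sum_tsub_distrib _ fun i _ => hy.2 i, hy.1, Nat.add_sub_cancel]
  · intro z hz
    simp only [mem_coe, mem_antidiagonalTuple] at hz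
    simp [mem_antidiagonalTuple, sum_add_distrib, hz]
  · intro y hy
    simp only [coe_filter] at hy
    exact tsub_add_cancel_of_le hy.2
  · intro z _
    exact add_tsub_cancel_right z c

theorem filter_le_antidiagonalTuple_eq_empty {n m : ℕ} (c : Fin n → ℕ) (h : m < ∑ i, c i) :
    {y ∈ antidiagonalTuple n m | ∀ i, c i ≤ y i} = ∅ := by
  refine filter_false_of_mem fun y hy hcy => h.not_ge ?_
  rw [← mem_antidiagonalTuple.mp hy]
  exact sum_le_sum fun i _ => hcy i

theorem card_filter_le_antidiagonalTuple {n : ℕ} (c : Fin n → ℕ) (m : ℕ) :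
    #{y ∈ antidiagonalTuple n m | ∀ i, c i ≤ y i} =
      if ∑ i, c i ≤ m then (n + (m - ∑ i, c i) - 1).choose (m - ∑ i, c i) else 0 := by
  split_ifs with h
  · obtain ⟨m, rfl⟩ := Nat.exists_eq_add_of_le h
    rw [Nat.add_sub_cancel_left, add_comm, card_filter_le_antidiagonalTuple_add,
      card_antidiagonalTuple]
  · rw [filter_le_antidiagonalTuple_eq_empty c (not_le.mp h), card_empty]

theorem card_filter_forall_mem_lt_antidiagonalTuple {n : ℕ} (T : Finset (Fin n)) (t m : ℕ) :
    #{y ∈ antidiagonalTuple n m | ∀ i ∈ T, t < y i} =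
      if #T * (t + 1) ≤ m then (n + (m - #T * (t + 1)) - 1).choose (m - #T * (t + 1)) else 0 := by
  let c : Fin n → ℕ := fun i => if i ∈ T then t + 1 else 0
  have hc (y : Fin n → ℕ) : (∀ i ∈ T, t < y i) ↔ ∀ i, c i ≤ y i := by
    refine forall_congr' fun i => ?_
    by_cases hi : i ∈ T <;> simp [c, hi]
  have hsum : ∑ i, c i = #T * (t + 1) := by
    rw [sum_ite_mem, univ_inter, sum_const, smul_eq_mul]
  rw [filter_congr fun y _ => hc y, card_filter_le_antidiagonalTuple, hsum]

end Nat

end Finset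

open Finset.Nat

theorem latticeCount_eq_card_filter_antidiagonalTuple (n k t : ℕ) :
    latticeCount n k t = #{y ∈ antidiagonalTuple n (k * t) | ∀ i, ¬ t < y i} := by
  unfold latticeCount
  congr 1
  ext y
  simp only [mem_filter, Fintype.mem_piFinset, mem_range, mem_antidiagonalTuple, not_lt,
    Nat.lt_succ_iff]
  tauto

theorem card_filter_forall_mem_lt_antidiagonalTuple_mul {n k : ℕ} (hk : 1 ≤ k)
    (hkn : k ≤ n - 1) (T : Finset (Fin n)) (t : ℕ) :
    #{y ∈ antidiagonalTuple n (k * t) | ∀ i ∈ T, t < y i} =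
      if #T < k then ((k - #T) * t + n - 1 - #T).choose (n - 1) else 0 := by
  rw [card_filter_forall_mem_lt_antidiagonalTuple]
  set j := #T
  have hmul : j * (t + 1) = j * t + j := mul_add_one j t
  by_cases hjk : j < k
  · have hjt : j * t ≤ k * t := Nat.mul_le_mul_right t hjk.le
    have hsub : (k - j) * t = k * t - j * t := Nat.sub_mul k j t
    split_ifs with h
    · rw [Nat.choose_symm_of_eq_add (by omega : n + (k * t - j * (t + 1)) - 1 =
        k * t - j * (t + 1) + (n - 1))]
      congr 1
      omega
    · exact (Nat.choose_eq_zero_of_lt (by omega)).symm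
  · have hkt : k * t + k ≤ j * t + j :=
      Nat.add_le_add (Nat.mul_le_mul_right t (not_lt.1 hjk)) (not_lt.1 hjk)
    rw [if_neg (by omega), if_neg hjk]

/-- Katzman's formula for the number of lattice points of the `t`-th
dilate of the hypersimplex `Δ_{k,n}`. -/
theorem stmt_2 (n k : ℕ) (hk : 1 ≤ k) (hkn : k ≤ n - 1) (t : ℕ) :
    (latticeCount n k t : ℤ) =
      ∑ j ∈ Finset.range k, (-1 : ℤ) ^ j * (n.choose j : ℤ) *
        ((((k - j) * t + n - 1 - j).choose (n - 1) : ℤ)) := by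
  let a : ℕ → ℤ := fun j =>
    (-1) ^ j * ((if j < k then ((k - j) * t + n - 1 - j).choose (n - 1) else 0 : ℕ) : ℤ)
  calc (latticeCount n k t : ℤ)
      = ∑ T : Finset (Fin n), (-1 : ℤ) ^ #T *
          #{y ∈ antidiagonalTuple n (k * t) | ∀ i ∈ T, t < y i} := by
        rw [latticeCount_eq_card_filter_antidiagonalTuple]
        -- `convert` reconciles the `Fin n`-specific decidability instance of `∀ i, ¬ t < y i`
        convert card_filter_forall_not _ fun i (y : Fin n → ℕ) => t < y i
    _ = ∑ T : Finset (Fin n), a #T := by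
        simp only [card_filter_forall_mem_lt_antidiagonalTuple_mul hk hkn, a]
    _ = ∑ j ∈ range (n + 1), n.choose j • a j := by
        rw [← powerset_univ, sum_powerset_apply_card, card_univ, Fintype.card_fin]
    _ = ∑ j ∈ range k, n.choose j • a j := by
        refine (sum_subset (range_subset_range.2 (by omega)) fun j _ hj => ?_).symm
        simp [a, if_neg (mem_range.not.1 hj)]
    _ = _ := sum_congr rfl fun j hj => by
        simp only [a, if_pos (mem_range.1 hj), nsmul_eq_mul]
        ring
end

section
/- For integers n ≥ m ≥ 1 and every integer ℓ with ℓ > n − m, the weighted Lah number W(ℓ,n,m) equals 0; moreover W(n−m, n, m) > 0, i.e., W(ℓ,n,m) ≠ 0 exactly for 0 ≤ ℓ ≤ n − m. -/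
open Finset Polynomial

/-!
The head of a block is not smaller than itself, so a block's weight is less than its length;
since the block lengths of a partition of `{1,…,n}` sum to `n`, a partition into `m` blocks has
weight at most `n - m`. The bound is attained by the block `[n-m+1, 1, 2, …, n-m]` together with
the singletons `[n-m+2], …, [n]`.
-/

theorem List.Nodup.mem_biUnion_lists {α : Type*} [DecidableEq α] {s : Finset α} {l : List α}
    (hl : l.Nodup) (hs : ∀ x ∈ l, x ∈ s) :
    l ∈ s.powerset.biUnion fun t => t.val.lists.toFinset := by
  refine mem_biUnion.2 ⟨l.toFinset, mem_powerset.2 fun x hx => hs x (List.mem_toFinset.1 hx), ?_⟩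
  rw [Multiset.mem_toFinset, Multiset.mem_lists_iff, List.toFinset_val, hl.dedup]
  rfl

theorem blockWeight_lt_length {b : List ℕ} (hb : b ≠ []) : blockWeight b < b.length := by
  obtain ⟨x, t, rfl⟩ := List.exists_cons_of_ne_nil hb
  rw [blockWeight, List.countP_eq_length_filter, List.length_filter_lt_length_iff_exists]
  exact ⟨x, List.mem_cons_self, by simp⟩

namespace IsLOPartition

variable {n m : ℕ} {P : Finset (List ℕ)}

theorem sum_length (h : IsLOPartition n m P) : ∑ b ∈ P, b.length = n := by
  obtain ⟨-, hblocks, hdisj, hcover⟩ := h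
  have hunion : P.biUnion List.toFinset = Icc 1 n := by
    ext x
    simpa only [mem_biUnion, List.mem_toFinset] using hcover x
  have hpairwise : (P : Set (List ℕ)).PairwiseDisjoint List.toFinset :=
    fun b hb c hc hbc => disjoint_left.2 fun x hxb hxc =>
      hdisj b hb c hc hbc x (List.mem_toFinset.1 hxb) (List.mem_toFinset.1 hxc)
  calc ∑ b ∈ P, b.length = ∑ b ∈ P, b.toFinset.card :=
        sum_congr rfl fun b hb => (List.toFinset_card_of_nodup (hblocks b hb).2).symm
    _ = n := by rw [← card_biUnion hpairwise, hunion, Nat.card_Icc, Nat.add_sub_cancel]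

theorem partWeight_add_le (h : IsLOPartition n m P) : partWeight P + m ≤ n := by
  have hlt : ∑ b ∈ P, (blockWeight b + 1) ≤ ∑ b ∈ P, b.length :=
    sum_le_sum fun b hb => blockWeight_lt_length (h.2.1 b hb).1
  rw [sum_add_distrib, ← card_eq_sum_ones, h.1, h.sum_length] at hlt
  exact hlt

theorem of_blockOf (g : ℕ → List ℕ) (hcard : P.card = m) (hblocks : ∀ b ∈ P, b ≠ [] ∧ b.Nodup)
    (hblockOf : ∀ b ∈ P, ∀ y ∈ b, y ∈ Icc 1 n ∧ g y = b)
    (hmem : ∀ y ∈ Icc 1 n, g y ∈ P ∧ y ∈ g y) : IsLOPartition n m P := by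
  refine ⟨hcard, hblocks, fun b hb c hc hbc x hxb hxc => ?_, fun x => ⟨?_, ?_⟩⟩
  · exact hbc ((hblockOf b hb x hxb).2.symm.trans (hblockOf c hc x hxc).2)
  · rintro ⟨b, hb, hxb⟩
    exact (hblockOf b hb x hxb).1
  · exact fun hx => ⟨g x, hmem x hx⟩

theorem finite_setOf : {P | IsLOPartition n m P}.Finite := by
  refine ((Icc 1 n).powerset.biUnion fun t => t.val.lists.toFinset).powerset.finite_toSet.subset
    fun P hP => mem_powerset.2 fun b hb => ?_
  exact (hP.2.1 b hb).2.mem_biUnion_lists fun x hx => (hP.2.2.2 x).1 ⟨b, hb, hx⟩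

end IsLOPartition

def topBlock (k : ℕ) : List ℕ := (k + 1) :: List.range' 1 k

def maxWeightPartition (k n : ℕ) : Finset (List ℕ) :=
  insert (topBlock k) ((Icc (k + 2) n).image fun x => [x])

theorem mem_topBlock {k y : ℕ} : y ∈ topBlock k ↔ 1 ≤ y ∧ y ≤ k + 1 := by
  rw [topBlock, List.mem_cons, List.mem_range'_1]
  omega

theorem blockWeight_topBlock (k : ℕ) : blockWeight (topBlock k) = k := by
  rw [blockWeight, topBlock, List.headI_cons, List.countP_cons_of_neg (by simp),
    List.countP_eq_length.2 fun y hy =>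
      decide_eq_true (by have := List.mem_range'_1.1 hy; omega), List.length_range']

theorem topBlock_notMem_image_singleton (k n : ℕ) :
    topBlock k ∉ (Icc (k + 2) n).image fun x => [x] := by
  simp only [mem_image, mem_Icc, topBlock]
  rintro ⟨x, hx, hxk⟩
  have := (List.cons_eq_cons.1 hxk).1
  omega

theorem card_maxWeightPartition (k n : ℕ) : (maxWeightPartition k n).card = n - (k + 1) + 1 := by
  rw [maxWeightPartition, card_insert_of_notMem (topBlock_notMem_image_singleton k n),
    card_image_of_injective _ List.singleton_injective, Nat.card_Icc]
  omega

theorem partWeight_maxWeightPartition (k n : ℕ) : partWeight (maxWeightPartition k n) = k := by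
  rw [partWeight, maxWeightPartition, sum_insert (topBlock_notMem_image_singleton k n),
    blockWeight_topBlock, sum_image fun x _ y _ => List.singleton_inj.1]
  simp [blockWeight]

theorem isLOPartition_maxWeightPartition {k n : ℕ} (hkn : k < n) :
    IsLOPartition n (n - k) (maxWeightPartition k n) := by
  refine .of_blockOf (fun y => if y ≤ k + 1 then topBlock k else [y])
    (by rw [card_maxWeightPartition]; omega) ?_ ?_ ?_
  · simp only [maxWeightPartition, mem_insert]
    rintro b (rfl | hb)
    · refine ⟨List.cons_ne_nil _ _, List.nodup_cons.2 ⟨?_, List.nodup_range'⟩⟩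
      rw [List.mem_range'_1]
      omega
    · obtain ⟨x, -, rfl⟩ := mem_image.1 hb
      exact ⟨List.cons_ne_nil _ _, List.nodup_singleton x⟩
  · simp only [maxWeightPartition, mem_insert]
    rintro b (rfl | hb) y hy
    · have := mem_topBlock.1 hy
      exact ⟨mem_Icc.2 (by omega), if_pos this.2⟩
    · obtain ⟨x, hx, rfl⟩ := mem_image.1 hb
      obtain rfl := List.mem_singleton.1 hy
      have := mem_Icc.1 hx
      exact ⟨mem_Icc.2 (by omega), if_neg (by omega)⟩
  · intro y hy
    have := mem_Icc.1 hy
    split_ifs with hyk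
    · exact ⟨mem_insert_self _ _, mem_topBlock.2 ⟨this.1, hyk⟩⟩
    · refine ⟨mem_insert_of_mem (mem_image_of_mem _ (mem_Icc.2 (by omega))), ?_⟩
      exact List.mem_singleton_self y

/-- `W(ℓ,n,m) = 0` for `ℓ > n - m`, and `W(n-m,n,m) > 0`. -/
theorem stmt_4 (n m : ℕ) (hm : 1 ≤ m) (hmn : m ≤ n) :
    (∀ ℓ : ℤ, (n : ℤ) - (m : ℤ) < ℓ → weightedLah ℓ n m = 0) ∧
      0 < weightedLah ((n : ℤ) - (m : ℤ)) n m := by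
  refine ⟨fun ℓ hℓ => Nat.card_eq_zero.2 (.inl ⟨fun ⟨P, hP, hw⟩ => ?_⟩),
    Nat.card_pos_iff.2 ⟨?_, ?_⟩⟩
  · have := hP.partWeight_add_le
    omega
  · have hpart := isLOPartition_maxWeightPartition (k := n - m) (n := n) (by omega)
    rw [Nat.sub_sub_self hmn] at hpart
    exact ⟨⟨_, hpart, by rw [partWeight_maxWeightPartition, Nat.cast_sub hmn]⟩⟩
  · exact (IsLOPartition.finite_setOf.subset fun P hP => hP.1).to_subtype
end

section
/- For integers n ≥ m ≥ 1, the weighted Lah number W(0,n,m) equals the unsigned Stirling number of the first kind ⟦n, m⟧, the number of permutations of {1,…,n} with exactly m cycles. -/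
open Finset Polynomial

/-! A linearly ordered block has weight zero exactly when it starts with its least element.
Listing each cycle of a permutation from its least element onwards therefore gives a weight-zero
linearly ordered partition with one block per cycle, and the permutation is recovered from these
blocks as the product of their rotations `List.formPerm`. So `σ ↦ {cycle lists of σ}` is a
bijection between permutations with `m` cycles and weight-zero partitions into `m` blocks. -/

open Function

theorem Finset.card_image_eq_card_image {ι β γ : Type*} [DecidableEq β] [DecidableEq γ]
    {s : Finset ι} {f : ι → β} {g : ι → γ}
    (h : ∀ x ∈ s, ∀ y ∈ s, f x = f y ↔ g x = g y) : #(s.image f) = #(s.image g) := by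
  classical
  let p : ι → β × γ := fun x => (f x, g x)
  have hf : #((s.image p).image Prod.fst) = #(s.image p) := by
    refine card_image_of_injOn ?_
    rintro _ hpx _ hpy hxy
    obtain ⟨x, hx, rfl⟩ := mem_image.1 hpx
    obtain ⟨y, hy, rfl⟩ := mem_image.1 hpy
    exact Prod.ext hxy ((h x hx y hy).1 hxy)
  have hg : #((s.image p).image Prod.snd) = #(s.image p) := by
    refine card_image_of_injOn ?_
    rintro _ hpx _ hpy hxy
    obtain ⟨x, hx, rfl⟩ := mem_image.1 hpx
    obtain ⟨y, hy, rfl⟩ := mem_image.1 hpy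
    exact Prod.ext ((h x hx y hy).2 hxy) hxy
  rw [image_image] at hf hg
  exact hf.trans hg.symm

namespace Equiv.Perm

theorem image_cycleOf_support {α : Type*} [Fintype α] [DecidableEq α] (σ : Perm α) :
    σ.support.image σ.cycleOf = σ.cycleFactorsFinset := by
  ext c
  refine ⟨fun hc => ?_, fun hc => ?_⟩
  · obtain ⟨x, hx, rfl⟩ := mem_image.1 hc
    exact cycleOf_mem_cycleFactorsFinset_iff.2 hx
  · obtain ⟨x, hx, -⟩ := (mem_cycleFactorsFinset_iff.1 hc).1
    have hxc : x ∈ c.support := mem_support.2 hx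
    exact mem_image.2
      ⟨x, mem_cycleFactorsFinset_support_le hc hxc, (cycle_is_cycleOf hxc hc).symm⟩

section Finite

variable {α : Type*} [Finite α] (σ : Perm α) {x y : α}

theorem minimalPeriod_pos (x : α) : 0 < minimalPeriod σ x :=
  minimalPeriod_pos_of_mem_periodicPts (σ.injective.mem_periodicPts x)

variable {σ} in
theorem sameCycle_iff_exists_pow_lt_minimalPeriod :
    σ.SameCycle x y ↔ ∃ i < minimalPeriod σ x, (σ ^ i) x = y := by
  refine ⟨fun h => ?_, fun ⟨i, _, h⟩ => ⟨i, by rw [zpow_natCast, h]⟩⟩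
  obtain ⟨i, rfl⟩ := h.exists_nat_pow_eq
  refine ⟨i % minimalPeriod σ x, Nat.mod_lt _ (σ.minimalPeriod_pos x), ?_⟩
  simp only [← iterate_eq_pow, iterate_mod_minimalPeriod_eq]

end Finite

variable {α : Type*} [Fintype α] [LinearOrder α] (σ : Perm α) {x y : α}

def cycleMin (x : α) : α :=
  (univ.filter (σ.SameCycle x)).min' ⟨x, mem_filter.2 ⟨mem_univ x, .refl σ x⟩⟩

theorem sameCycle_cycleMin (x : α) : σ.SameCycle x (σ.cycleMin x) := by
  unfold cycleMin
  simpa using (univ.filter (σ.SameCycle x)).min'_mem _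

variable {σ} in
theorem cycleMin_le (h : σ.SameCycle x y) : σ.cycleMin x ≤ y :=
  min'_le _ _ (by simpa using h)

variable {σ} in
theorem SameCycle.cycleMin_eq (h : σ.SameCycle x y) : σ.cycleMin x = σ.cycleMin y := by
  have hxy : univ.filter (σ.SameCycle x) = univ.filter (σ.SameCycle y) := by
    ext z
    simpa using ⟨h.symm.trans, h.trans⟩
  simp only [cycleMin, hxy]

noncomputable def cycleList (x : α) : List α :=
  (List.range (minimalPeriod σ (σ.cycleMin x))).map fun i => (σ ^ i) (σ.cycleMin x)

@[simp]
theorem length_cycleList (x : α) :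
    (σ.cycleList x).length = minimalPeriod σ (σ.cycleMin x) := by
  simp [cycleList]

@[simp]
theorem getElem_cycleList (x : α) (i : ℕ) (hi : i < (σ.cycleList x).length) :
    (σ.cycleList x)[i] = (σ ^ i) (σ.cycleMin x) := by
  simp [cycleList]

theorem mem_cycleList : y ∈ σ.cycleList x ↔ σ.SameCycle x y := by
  have hmin := σ.sameCycle_cycleMin x
  simp only [cycleList, List.mem_map, List.mem_range]
  rw [← sameCycle_iff_exists_pow_lt_minimalPeriod]
  exact ⟨hmin.trans, hmin.symm.trans⟩

theorem nodup_cycleList (x : α) : (σ.cycleList x).Nodup := by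
  refine List.nodup_range.map_on fun i hi j hj hij => ?_
  simp only [← iterate_eq_pow] at hij
  exact iterate_injOn_Iio_minimalPeriod (List.mem_range.1 hi) (List.mem_range.1 hj) hij

theorem cycleList_ne_nil (x : α) : σ.cycleList x ≠ [] :=
  List.ne_nil_of_mem (σ.mem_cycleList.2 (.refl σ x))

theorem apply_getElem_cycleList (x : α) (i : ℕ) (hi : i < (σ.cycleList x).length) :
    σ (σ.cycleList x)[i] = (σ.cycleList x)[(i + 1) % (σ.cycleList x).length]'
      (Nat.mod_lt _ (by omega)) := by
  simp only [getElem_cycleList, length_cycleList, ← iterate_eq_pow,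
    iterate_mod_minimalPeriod_eq, iterate_succ_apply']

theorem cycleList_eq_cycleList_iff : σ.cycleList x = σ.cycleList y ↔ σ.SameCycle x y := by
  refine ⟨fun h => ?_, fun h => by simp only [cycleList, h.cycleMin_eq]⟩
  have hy : y ∈ σ.cycleList x := h ▸ σ.mem_cycleList.2 (.refl σ y)
  exact σ.mem_cycleList.1 hy

theorem cycleList_eq_of_apply_eq_formPerm {l : List α} (hne : l ≠ []) (hnd : l.Nodup)
    (hmin : ∀ y ∈ l, l.head hne ≤ y) (hl : ∀ y ∈ l, σ y = l.formPerm y) (hx : x ∈ l) :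
    σ.cycleList x = l := by
  have hσ (i : ℕ) (hi : i < l.length) :
      σ l[i] = l[(i + 1) % l.length]'(Nat.mod_lt _ (by omega)) :=
    (hl _ (List.getElem_mem hi)).trans (List.formPerm_apply_getElem l hnd i hi)
  have hlen : 0 < l.length := List.length_pos_iff.2 hne
  have hpow (k : ℕ) : (σ ^ k) l[0] = l[k % l.length]'(Nat.mod_lt _ hlen) := by
    induction k with
    | zero => simp
    | succ k ih => simp only [pow_succ', mul_apply, ih, hσ, Nat.mod_add_mod]
  have hcycle (z : α) : σ.SameCycle l[0] z ↔ z ∈ l := by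
    refine ⟨fun h => ?_, fun hz => ?_⟩
    · obtain ⟨k, rfl⟩ := h.exists_nat_pow_eq
      exact hpow k ▸ List.getElem_mem _
    · obtain ⟨j, hj, rfl⟩ := List.getElem_of_mem hz
      exact ⟨j, by simp only [zpow_natCast, hpow, Nat.mod_eq_of_lt hj]⟩
  have hperiod : minimalPeriod σ l[0] = l.length := by
    have hper (k : ℕ) : IsPeriodicPt σ k l[0] ↔ l.length ∣ k := by
      rw [IsPeriodicPt, IsFixedPt, iterate_eq_pow, hpow, hnd.getElem_inj_iff,
        Nat.dvd_iff_mod_eq_zero]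
    exact Nat.dvd_antisymm (isPeriodicPt_iff_minimalPeriod_dvd.1 ((hper _).2 dvd_rfl))
      ((hper _).1 (isPeriodicPt_minimalPeriod σ _))
  have hx0 : σ.SameCycle l[0] x := (hcycle x).2 hx
  have hcycleMin : σ.cycleMin x = l[0] := by
    refine le_antisymm (cycleMin_le hx0.symm) ?_
    rw [← List.head_eq_getElem hne]
    exact hmin _ ((hcycle _).1 (hx0.trans (σ.sameCycle_cycleMin x)))
  refine List.ext_getElem (by rw [length_cycleList, hcycleMin, hperiod]) fun i _ hi => ?_
  simp only [getElem_cycleList, hcycleMin, hpow, Nat.mod_eq_of_lt hi]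

-- `cycleType` records only the cycles of length at least two; each fixed point is its own cycle.
theorem card_image_cycleList :
    #(univ.image σ.cycleList) = σ.cycleType.card + (Fintype.card α - #σ.support) := by
  have hdisj :
      _root_.Disjoint (σ.support.image σ.cycleList) (σ.supportᶜ.image σ.cycleList) := by
    refine disjoint_left.2 fun l hl hl' => ?_
    obtain ⟨x, hx, rfl⟩ := mem_image.1 hl
    obtain ⟨y, hy, hyx⟩ := mem_image.1 hl'
    exact mem_compl.1 hy ((σ.cycleList_eq_cycleList_iff.1 hyx).mem_support_iff.2 hx)
  have hcycles : #(σ.support.image σ.cycleList) = σ.cycleType.card := by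
    rw [card_image_eq_card_image fun x hx y hy => σ.cycleList_eq_cycleList_iff.trans
      (sameCycle_iff_cycleOf_eq_of_mem_support hx hy), image_cycleOf_support, cycleType_def,
      Multiset.card_map, card_val]
  have hfixed : #(σ.supportᶜ.image σ.cycleList) = Fintype.card α - #σ.support := by
    rw [card_image_of_injOn, card_compl]
    intro x hx y _ hxy
    exact (σ.cycleList_eq_cycleList_iff.1 hxy).eq_of_left (notMem_support.1 (mem_compl.1 hx))
  rw [← union_compl σ.support, image_union, card_union_of_disjoint hdisj, hcycles, hfixed]

theorem head_cycleList_le (hy : y ∈ σ.cycleList x) :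
    (σ.cycleList x).head (σ.cycleList_ne_nil x) ≤ y := by
  rw [List.head_eq_getElem, getElem_cycleList, pow_zero, one_apply]
  exact cycleMin_le (σ.mem_cycleList.1 hy)

theorem apply_eq_formPerm_cycleList (hy : y ∈ σ.cycleList x) :
    σ y = (σ.cycleList x).formPerm y := by
  obtain ⟨i, hi, rfl⟩ := List.getElem_of_mem hy
  rw [apply_getElem_cycleList, List.formPerm_apply_getElem _ (σ.nodup_cycleList x)]

theorem image_cycleList_injective : Injective fun σ : Perm α => univ.image σ.cycleList := by
  intro σ τ h
  simp only at h
  have hlist (x : α) : σ.cycleList x = τ.cycleList x := by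
    obtain ⟨y, -, hy⟩ := mem_image.1 (h ▸ mem_image_of_mem σ.cycleList (mem_univ x))
    rw [← hy, τ.cycleList_eq_cycleList_iff]
    exact τ.mem_cycleList.1 (hy ▸ σ.mem_cycleList.2 (.refl σ x))
  ext x
  have hx : x ∈ σ.cycleList x := σ.mem_cycleList.2 (.refl σ x)
  rw [apply_eq_formPerm_cycleList σ hx, hlist, ← apply_eq_formPerm_cycleList τ (hlist x ▸ hx)]

theorem exists_image_cycleList_eq {Q : Finset (List α)} (hne : ∀ l ∈ Q, l ≠ [])
    (hnd : ∀ l ∈ Q, l.Nodup) (hmin : ∀ l (hl : l ∈ Q), ∀ y ∈ l, l.head (hne l hl) ≤ y)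
    (hdisj : ∀ l ∈ Q, ∀ l' ∈ Q, ∀ x ∈ l, x ∈ l' → l = l')
    (hcover : ∀ x, ∃ l ∈ Q, x ∈ l) :
    ∃ σ : Perm α, univ.image σ.cycleList = Q := by
  choose block hblockQ hmem_block using hcover
  have hblock_eq {l : List α} (hl : l ∈ Q) {x : α} (hx : x ∈ l) : block x = l :=
    hdisj _ (hblockQ x) _ hl x (hmem_block x) hx
  have hinj : Injective fun x => (block x).formPerm x := by
    intro x y hxy
    replace hxy : (block x).formPerm x = (block y).formPerm y := hxy
    have hblock : block x = block y := hdisj _ (hblockQ x) _ (hblockQ y) _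
      (List.formPerm_apply_mem_of_mem (hmem_block x))
      (hxy ▸ List.formPerm_apply_mem_of_mem (hmem_block y))
    rw [hblock] at hxy
    exact (block y).formPerm.injective hxy
  let σ : Perm α := Equiv.ofBijective _ (Finite.injective_iff_bijective.1 hinj)
  have hσ {l : List α} (hl : l ∈ Q) {x : α} (hx : x ∈ l) : σ.cycleList x = l := by
    refine σ.cycleList_eq_of_apply_eq_formPerm (hne l hl) (hnd l hl) (hmin l hl)
      (fun y hy => ?_) hx
    change (block y).formPerm y = _
    rw [hblock_eq hl hy]
  refine ⟨σ, Finset.ext fun l => ⟨fun hl => ?_, fun hl => ?_⟩⟩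
  · obtain ⟨x, -, rfl⟩ := mem_image.1 hl
    rw [hσ (hblockQ x) (hmem_block x)]
    exact hblockQ x
  · obtain ⟨x, hx⟩ := List.exists_mem_of_ne_nil l (hne l hl)
    exact mem_image.2 ⟨x, mem_univ x, hσ hl hx⟩

end Equiv.Perm

theorem blockWeight_map_eq_zero_iff {α : Type*} [LinearOrder α] {e : α → ℕ}
    (he : StrictMono e) {l : List α} (hne : l ≠ []) :
    blockWeight (l.map e) = 0 ↔ ∀ y ∈ l, l.head hne ≤ y := by
  cases l with
  | nil => exact absurd rfl hne
  | cons a t => simp [blockWeight, List.countP_eq_zero, he.lt_iff_lt]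

section Shift

variable {n : ℕ}

theorem Fin.strictMono_val_add_one : StrictMono fun x : Fin n => (x : ℕ) + 1 :=
  fun _ _ h => Nat.add_lt_add_right h 1

theorem exists_image_map_val_add_one_eq {P : Finset (List ℕ)}
    (hP : ∀ b ∈ P, ∀ a ∈ b, a ∈ Icc 1 n) :
    ∃ Q : Finset (List (Fin n)), Q.image (List.map fun x : Fin n => (x : ℕ) + 1) = P := by
  obtain ⟨Q, -, hQ⟩ := subset_set_image_iff (s := Set.univ)
      (f := List.map fun x : Fin n => (x : ℕ) + 1) |>.1 <| by
    rw [Set.image_univ, Set.range_list_map]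
    intro b hb a ha
    have := hP b hb a ha
    simp only [mem_Icc] at this
    exact ⟨⟨a - 1, by omega⟩, by simp only; omega⟩
  exact ⟨Q, hQ⟩

end Shift

namespace Equiv.Perm

variable {n : ℕ}

noncomputable def cyclePartition (σ : Perm (Fin n)) : Finset (List ℕ) :=
  (univ.image σ.cycleList).image (List.map fun x : Fin n => (x : ℕ) + 1)

theorem card_cyclePartition (σ : Perm (Fin n)) :
    #σ.cyclePartition = σ.cycleType.card + (n - #σ.support) := by
  rw [cyclePartition, card_image_of_injective _
    (List.map_injective_iff.2 Fin.strictMono_val_add_one.injective), card_image_cycleList,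
    Fintype.card_fin]

theorem mem_cyclePartition {σ : Perm (Fin n)} {b : List ℕ} :
    b ∈ σ.cyclePartition ↔
      ∃ x, (σ.cycleList x).map (fun y : Fin n => (y : ℕ) + 1) = b := by
  simp [cyclePartition]

theorem isLOPartition_cyclePartition (σ : Perm (Fin n)) :
    IsLOPartition n (σ.cycleType.card + (n - #σ.support)) σ.cyclePartition := by
  have he : Injective fun x : Fin n => (x : ℕ) + 1 := Fin.strictMono_val_add_one.injective
  refine ⟨σ.card_cyclePartition, ?_, ?_, fun a => ⟨?_, fun ha => ?_⟩⟩
  · rintro b hb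
    obtain ⟨x, rfl⟩ := mem_cyclePartition.1 hb
    exact ⟨by simpa using σ.cycleList_ne_nil x, (σ.nodup_cycleList x).map he⟩
  · rintro b hb c hc hbc a hab hac
    obtain ⟨x, rfl⟩ := mem_cyclePartition.1 hb
    obtain ⟨y, rfl⟩ := mem_cyclePartition.1 hc
    obtain ⟨z, hz, rfl⟩ := List.mem_map.1 hab
    rw [List.mem_map_of_injective he] at hac
    refine hbc (congrArg _ (σ.cycleList_eq_cycleList_iff.2 ?_))
    exact (σ.mem_cycleList.1 hz).trans (σ.mem_cycleList.1 hac).symm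
  · rintro ⟨b, hb, hab⟩
    obtain ⟨x, rfl⟩ := mem_cyclePartition.1 hb
    obtain ⟨z, -, rfl⟩ := List.mem_map.1 hab
    simp only [mem_Icc]
    omega
  · simp only [mem_Icc] at ha
    let y : Fin n := ⟨a - 1, by omega⟩
    refine ⟨_, mem_cyclePartition.2 ⟨y, rfl⟩,
      List.mem_map.2 ⟨y, σ.mem_cycleList.2 (.refl σ y), ?_⟩⟩
    simp only [y]
    omega

theorem partWeight_cyclePartition (σ : Perm (Fin n)) : partWeight σ.cyclePartition = 0 := by
  refine sum_eq_zero fun b hb => ?_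
  obtain ⟨x, rfl⟩ := mem_cyclePartition.1 hb
  exact (blockWeight_map_eq_zero_iff Fin.strictMono_val_add_one _).2 fun y hy =>
    σ.head_cycleList_le hy

theorem cyclePartition_injective : Injective (cyclePartition (n := n)) :=
  (image_injective (List.map_injective_iff.2 Fin.strictMono_val_add_one.injective)).comp
    image_cycleList_injective

theorem exists_cyclePartition_eq {m : ℕ} {P : Finset (List ℕ)} (hP : IsLOPartition n m P)
    (hw : partWeight P = 0) : ∃ σ : Perm (Fin n), σ.cyclePartition = P := by
  obtain ⟨-, hblocks, hdisj, hcover⟩ := hP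
  have he : StrictMono fun x : Fin n => (x : ℕ) + 1 := Fin.strictMono_val_add_one
  obtain ⟨Q, rfl⟩ :=
    exists_image_map_val_add_one_eq fun b hb a ha => (hcover a).1 ⟨b, hb, ha⟩
  simp only [mem_image, forall_exists_index, and_imp, forall_apply_eq_imp_iff₂] at hblocks hdisj
  rw [partWeight, sum_image fun l _ l' _ h => List.map_injective_iff.2 he.injective h,
    sum_eq_zero_iff] at hw
  have hne (l : List (Fin n)) (hl : l ∈ Q) : l ≠ [] := by simpa using (hblocks l hl).1
  obtain ⟨σ, hσ⟩ := exists_image_cycleList_eq hne (fun l hl => (hblocks l hl).2.of_map)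
    (fun l hl => (blockWeight_map_eq_zero_iff he (hne l hl)).1 (hw l hl))
    (fun l hl l' hl' x hx hx' => by
      by_contra h
      exact hdisj l hl l' hl' (fun h' => h (List.map_injective_iff.2 he.injective h')) _
        (List.mem_map_of_mem hx) (List.mem_map_of_mem hx'))
    (fun x => by
      obtain ⟨b, hb, hxb⟩ := (hcover ((x : ℕ) + 1)).2 (by simp only [mem_Icc]; omega)
      obtain ⟨l, hl, rfl⟩ := mem_image.1 hb
      exact ⟨l, hl, (List.mem_map_of_injective he.injective).1 hxb⟩)
  exact ⟨σ, by rw [cyclePartition, hσ]⟩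

end Equiv.Perm

theorem stmt_5_general (n m : ℕ) :
    weightedLah 0 n m = stirling1 n m := by
  let toPartition (σ : {σ : Equiv.Perm (Fin n) // σ.cycleType.card + (n - #σ.support) = m}) :
      {P // IsLOPartition n m P ∧ (partWeight P : ℤ) = 0} :=
    ⟨σ.1.cyclePartition, by simpa only [σ.2] using σ.1.isLOPartition_cyclePartition,
      by simp [σ.1.partWeight_cyclePartition]⟩
  refine (Nat.card_eq_of_bijective toPartition ⟨fun σ τ h => ?_, fun P => ?_⟩).symm
  · exact Subtype.ext (Equiv.Perm.cyclePartition_injective (congrArg Subtype.val h))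
  · obtain ⟨σ, hσ⟩ := Equiv.Perm.exists_cyclePartition_eq P.2.1 (by exact_mod_cast P.2.2)
    exact ⟨⟨σ, σ.card_cyclePartition.symm.trans (hσ ▸ P.2.1.1)⟩, Subtype.ext hσ⟩

/-- `W(0,n,m)` equals the unsigned Stirling number of the first kind. -/
theorem stmt_5 (n m : ℕ) (hm : 1 ≤ m) (hmn : m ≤ n) :
    weightedLah 0 n m = stirling1 n m :=
  stmt_5_general n m
end

section
/- For integers n ≥ 2, m ≥ 2 and ℓ ≥ 0, the weighted Lah numbers satisfy the recurrence W(ℓ, n, m) = (n−1) · W(ℓ−1, n−1, m) + Σ_{j=0}^{n−1} C(n−1, j) · j! · W(ℓ, n−1−j, m−1), where C denotes the binomial coefficient and by convention W(ℓ', n', m') = 0 whenever ℓ' < 0, or m' > n', or n' = 0 with m' ≥ 1. -/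
open Finset Polynomial

/-!
Follow the block containing the least element `a` of the ground set `insert a S`. Either this
block is `a :: r` for a duplicate-free list `r` in `S`; it has weight `0`, and the other blocks
partition `S \ r` into `m - 1` blocks. Or `a` stands right after an entry of a block `c` of a
partition of `S`; deleting `a` lowers the weight by one, and there are `c.length` places for `a`.
Summing the second case over `c` counts, for each `y ∈ S`, the partitions of `S` with the block
of `y` removed, which gives `#S` times the number of partitions of `S` of weight `ℓ - 1`.

The resulting recurrence involves the ground sets only through their cardinalities, so by
induction the counts on `S` equal those on `{1, …, #S}`. This turns the sum over `r` into
`∑ j, C(n - 1, j) j! W(ℓ, n - 1 - j, m - 1)`.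
-/

section NodupLists

variable {α : Type*} [DecidableEq α]

noncomputable def nodupLists (S : Finset α) : Finset (List α) :=
  (range (#S + 1)).biUnion fun j => univ.image fun f : Fin j ↪ S => List.ofFn fun i => (f i : α)

theorem mem_nodupLists {S : Finset α} {l : List α} :
    l ∈ nodupLists S ↔ l.Nodup ∧ ∀ x ∈ l, x ∈ S := by
  simp only [nodupLists, mem_biUnion, mem_range, mem_image, mem_univ, true_and]
  constructor
  · rintro ⟨j, -, f, rfl⟩
    refine ⟨List.nodup_ofFn.mpr (Subtype.val_injective.comp f.injective), fun x hx => ?_⟩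
    obtain ⟨i, rfl⟩ := List.mem_ofFn.mp hx
    exact (f i).2
  · rintro ⟨hnd, hS⟩
    have hlen : l.length ≤ #S := by
      rw [← List.toFinset_card_of_nodup hnd]
      exact card_le_card fun x hx => hS x (List.mem_toFinset.mp hx)
    refine ⟨l.length, Nat.lt_succ_of_le hlen,
      ⟨fun i => ⟨l[i], hS _ (List.getElem_mem _)⟩, fun i j h => ?_⟩, List.ofFn_getElem⟩
    exact Fin.ext ((hnd.getElem_inj_iff).mp (congrArg Subtype.val h))

theorem sum_nodupLists_length (S : Finset α) (f : ℕ → ℕ) :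
    ∑ r ∈ nodupLists S, f r.length = ∑ j ∈ range (#S + 1), (#S).descFactorial j * f j := by
  rw [nodupLists, sum_biUnion]
  · refine sum_congr rfl fun j _ => ?_
    rw [sum_congr rfl fun r hr => ?_, sum_const, smul_eq_mul, card_image_of_injective,
      card_univ, Fintype.card_embedding_eq, Fintype.card_fin, Fintype.card_coe]
    · exact fun f g h => DFunLike.coe_injective (funext fun i => Subtype.val_injective
        (congrFun (List.ofFn_injective h) i))
    · obtain ⟨g, -, rfl⟩ := mem_image.mp hr
      rw [List.length_ofFn]
  · intro j _ k _ hjk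
    simp only [Function.onFun, disjoint_left, mem_image]
    rintro _ ⟨f, -, rfl⟩ ⟨g, -, hfg⟩
    exact hjk (by simpa using congrArg List.length hfg.symm)

theorem card_sdiff_toFinset {S : Finset α} {r : List α} (hr : r ∈ nodupLists S) :
    #(S \ r.toFinset) = #S - r.length := by
  obtain ⟨hnd, hS⟩ := mem_nodupLists.mp hr
  rw [card_sdiff_of_subset fun x hx => hS x (List.mem_toFinset.mp hx),
    List.toFinset_card_of_nodup hnd]

end NodupLists

section InsertIdx

variable {α : Type*} {a : α} {c : List α} {i : ℕ}

theorem nodup_insertIdx (hc : c.Nodup) (ha : a ∉ c) (hi : i ≤ c.length) :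
    (c.insertIdx i a).Nodup :=
  (List.perm_insertIdx a c hi).nodup_iff.mpr (List.nodup_cons.mpr ⟨ha, hc⟩)

theorem idxOf_insertIdx [DecidableEq α] (hc : c.Nodup) (ha : a ∉ c) (hi : i ≤ c.length) :
    (c.insertIdx i a).idxOf a = i := by
  have hlt : i < (c.insertIdx i a).length := by
    rw [List.length_insertIdx_of_le_length hi]; omega
  simpa only [List.getElem_insertIdx_self] using (nodup_insertIdx hc ha hi).idxOf_getElem i hlt

theorem erase_insertIdx [DecidableEq α] (hc : c.Nodup) (ha : a ∉ c) (hi : i ≤ c.length) :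
    (c.insertIdx i a).erase a = c := by
  rw [← List.eraseIdx_idxOf_eq_erase, idxOf_insertIdx hc ha hi, List.eraseIdx_insertIdx_self]

theorem insertIdx_erase_idxOf [DecidableEq α] {b : List α} (ha : a ∈ b) :
    (b.erase a).insertIdx (b.idxOf a) a = b := by
  have hlt := List.idxOf_lt_length_iff.mpr ha
  conv_lhs => rw [← List.eraseIdx_idxOf_eq_erase]; arg 3; rw [← List.getElem_idxOf hlt]
  exact List.insertIdx_eraseIdx_getElem hlt

end InsertIdx

theorem sum_filter_mem_nodupLists_insert {α M : Type*} [DecidableEq α] [AddCommMonoid M]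
    {S : Finset α} {a : α} (ha : a ∉ S) (f : List α → M) :
    ∑ b ∈ nodupLists (insert a S) with a ∈ b, f b =
      ∑ c ∈ nodupLists S, ∑ i ∈ range (c.length + 1), f (c.insertIdx i a) := by
  rw [sum_sigma']
  symm
  refine sum_nbij' (fun p => p.1.insertIdx p.2 a) (fun b => ⟨b.erase a, b.idxOf a⟩)
    ?_ ?_ ?_ ?_ fun _ _ => rfl
  · simp only [mem_filter, mem_sigma, mem_range, mem_nodupLists, and_imp]
    rintro ⟨c, i⟩ hc hcS hi
    have hac : a ∉ c := fun h => ha (hcS a h)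
    refine ⟨⟨nodup_insertIdx hc hac (Nat.le_of_lt_succ hi), fun x hx => ?_⟩,
      (List.mem_insertIdx (Nat.le_of_lt_succ hi)).mpr (Or.inl rfl)⟩
    rcases (List.mem_insertIdx (Nat.le_of_lt_succ hi)).mp hx with rfl | hx
    · exact mem_insert_self _ _
    · exact mem_insert_of_mem (hcS x hx)
  · simp only [mem_filter, mem_sigma, mem_range, mem_nodupLists, and_imp]
    intro b hb hbS hab
    refine ⟨⟨hb.erase a, fun x hx => ?_⟩, ?_⟩
    · obtain ⟨hxa, hxb⟩ := (hb.mem_erase_iff).mp hx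
      exact (mem_insert.mp (hbS x hxb)).resolve_left hxa
    · rw [List.length_erase_of_mem hab]
      have := List.idxOf_lt_length_iff.mpr hab
      omega
  · rintro ⟨c, i⟩ hci
    simp only [mem_sigma, mem_range, mem_nodupLists] at hci
    obtain ⟨⟨hc, hcS⟩, hi⟩ := hci
    have hac : a ∉ c := fun h => ha (hcS a h)
    simp only [erase_insertIdx hc hac (Nat.le_of_lt_succ hi),
      idxOf_insertIdx hc hac (Nat.le_of_lt_succ hi)]
  · intro b hb
    exact insertIdx_erase_idxOf (mem_filter.mp hb).2

structure IsLOPartitionOn (S : Finset ℕ) (m : ℕ) (P : Finset (List ℕ)) : Prop where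
  card_eq : #P = m
  ne_nil : ∀ b ∈ P, b ≠ []
  nodup : ∀ b ∈ P, b.Nodup
  disjoint : ∀ b ∈ P, ∀ c ∈ P, b ≠ c → ∀ x ∈ b, x ∉ c
  exists_mem_iff : ∀ x, (∃ b ∈ P, x ∈ b) ↔ x ∈ S

theorem isLOPartition_iff {n m : ℕ} {P : Finset (List ℕ)} :
    IsLOPartition n m P ↔ IsLOPartitionOn (Icc 1 n) m P :=
  ⟨fun ⟨hcard, hb, hdisj, hcov⟩ =>
      ⟨hcard, fun b h => (hb b h).1, fun b h => (hb b h).2, hdisj, hcov⟩,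
    fun h => ⟨h.card_eq, fun b hb => ⟨h.ne_nil b hb, h.nodup b hb⟩, h.disjoint,
      h.exists_mem_iff⟩⟩

namespace IsLOPartitionOn

variable {S : Finset ℕ} {m : ℕ} {P : Finset (List ℕ)} {b : List ℕ}

theorem mem_of_mem (hP : IsLOPartitionOn S m P) (hb : b ∈ P) {x : ℕ} (hx : x ∈ b) : x ∈ S :=
  (hP.exists_mem_iff x).mp ⟨b, hb, hx⟩

theorem mem_nodupLists (hP : IsLOPartitionOn S m P) (hb : b ∈ P) : b ∈ nodupLists S :=
  _root_.mem_nodupLists.mpr ⟨hP.nodup b hb, fun _ => hP.mem_of_mem hb⟩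

theorem eq_of_mem (hP : IsLOPartitionOn S m P) {c : List ℕ} (hb : b ∈ P) (hc : c ∈ P)
    {x : ℕ} (hxb : x ∈ b) (hxc : x ∈ c) : b = c :=
  by_contra fun hbc => hP.disjoint b hb c hc hbc x hxb hxc

theorem eq_empty_of_zero (hP : IsLOPartitionOn S 0 P) : S = ∅ :=
  eq_empty_of_forall_notMem fun x hx => by
    obtain ⟨b, hb, -⟩ := (hP.exists_mem_iff x).mpr hx
    simp [card_eq_zero.mp hP.card_eq] at hb

theorem erase (hP : IsLOPartitionOn S (m + 1) P) (hb : b ∈ P) :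
    IsLOPartitionOn (S \ b.toFinset) m (P.erase b) where
  card_eq := by rw [card_erase_of_mem hb, hP.card_eq, Nat.add_sub_cancel]
  ne_nil c hc := hP.ne_nil c (mem_of_mem_erase hc)
  nodup c hc := hP.nodup c (mem_of_mem_erase hc)
  disjoint c hc d hd := hP.disjoint c (mem_of_mem_erase hc) d (mem_of_mem_erase hd)
  exists_mem_iff x := by
    simp only [mem_erase, mem_sdiff, List.mem_toFinset]
    constructor
    · rintro ⟨c, ⟨hcb, hc⟩, hxc⟩
      exact ⟨hP.mem_of_mem hc hxc, fun hxb => hcb (hP.eq_of_mem hc hb hxc hxb)⟩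
    · rintro ⟨hxS, hxb⟩
      obtain ⟨c, hc, hxc⟩ := (hP.exists_mem_iff x).mpr hxS
      exact ⟨c, ⟨fun h => hxb (h ▸ hxc), hc⟩, hxc⟩

theorem notMem_of_sdiff {Q : Finset (List ℕ)} (hQ : IsLOPartitionOn (S \ b.toFinset) m Q)
    (hb : b ≠ []) : b ∉ Q := fun h => by
  obtain ⟨x, hx⟩ := List.exists_mem_of_ne_nil b hb
  exact (mem_sdiff.mp (hQ.mem_of_mem h hx)).2 (List.mem_toFinset.mpr hx)

theorem insert {Q : Finset (List ℕ)} (hQ : IsLOPartitionOn (S \ b.toFinset) m Q)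
    (hb : b ∈ nodupLists S) (hne : b ≠ []) : IsLOPartitionOn S (m + 1) (insert b Q) where
  card_eq := by rw [card_insert_of_notMem (hQ.notMem_of_sdiff hne), hQ.card_eq]
  ne_nil c hc := (mem_insert.mp hc).elim (· ▸ hne) (hQ.ne_nil c)
  nodup c hc := (mem_insert.mp hc).elim (· ▸ (_root_.mem_nodupLists.mp hb).1) (hQ.nodup c)
  disjoint c hc d hd hcd x hxc hxd := by
    have hout : ∀ e ∈ Q, x ∈ e → x ∉ b := fun e he hxe hxb =>
      (mem_sdiff.mp (hQ.mem_of_mem he hxe)).2 (List.mem_toFinset.mpr hxb)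
    rcases mem_insert.mp hc with rfl | hcQ <;> rcases mem_insert.mp hd with rfl | hdQ
    · exact hcd rfl
    · exact hout d hdQ hxd hxc
    · exact hout c hcQ hxc hxd
    · exact hQ.disjoint c hcQ d hdQ hcd x hxc hxd
  exists_mem_iff x := by
    simp only [mem_insert, exists_eq_or_imp]
    rw [hQ.exists_mem_iff, mem_sdiff, List.mem_toFinset]
    have := (_root_.mem_nodupLists.mp hb).2 x
    tauto

end IsLOPartitionOn

open Classical in
noncomputable def loPartitions (ℓ : ℤ) (S : Finset ℕ) (m : ℕ) :
    Finset (Finset (List ℕ)) :=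
  {P ∈ (nodupLists S).powerset | IsLOPartitionOn S m P ∧ (partWeight P : ℤ) = ℓ}

theorem mem_loPartitions {ℓ : ℤ} {S : Finset ℕ} {m : ℕ} {P : Finset (List ℕ)} :
    P ∈ loPartitions ℓ S m ↔ IsLOPartitionOn S m P ∧ (partWeight P : ℤ) = ℓ := by
  classical
  rw [loPartitions, mem_filter, mem_powerset, and_iff_right_iff_imp]
  exact fun h _ hb => h.1.mem_nodupLists hb

theorem weightedLah_eq_card_loPartitions (ℓ : ℤ) (n m : ℕ) :
    weightedLah ℓ n m = #(loPartitions ℓ (Icc 1 n) m) := by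
  rw [weightedLah, ← Nat.card_eq_finsetCard]
  exact Nat.card_congr (Equiv.subtypeEquivRight fun P => by
    rw [mem_loPartitions, isLOPartition_iff])

theorem card_loPartitions_zero {ℓ : ℤ} {S : Finset ℕ} (hS : S.Nonempty) :
    #(loPartitions ℓ S 0) = 0 :=
  card_eq_zero.mpr <| eq_empty_of_forall_notMem fun _ hP =>
    hS.ne_empty (mem_loPartitions.mp hP).1.eq_empty_of_zero

theorem partWeight_eq_add_erase {b : List ℕ} {P : Finset (List ℕ)} (hb : b ∈ P) :
    partWeight P = blockWeight b + partWeight (P.erase b) :=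
  (add_sum_erase P blockWeight hb).symm

theorem partWeight_insert {b : List ℕ} {Q : Finset (List ℕ)} (hb : b ∉ Q) :
    partWeight (insert b Q) = blockWeight b + partWeight Q :=
  sum_insert hb

theorem card_filter_mem_loPartitions (ℓ : ℤ) {S : Finset ℕ} (m : ℕ) {b : List ℕ}
    (hb : b ∈ nodupLists S) (hne : b ≠ []) :
    #{P ∈ loPartitions ℓ S (m + 1) | b ∈ P} =
      #(loPartitions (ℓ - blockWeight b) (S \ b.toFinset) m) := by
  refine card_nbij' (·.erase b) (insert b) ?_ ?_ ?_ ?_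
  · intro P hP
    rw [mem_coe, mem_filter, mem_loPartitions] at hP
    obtain ⟨⟨hP, hw⟩, hbP⟩ := hP
    refine mem_loPartitions.mpr ⟨hP.erase hbP, ?_⟩
    rw [partWeight_eq_add_erase hbP] at hw
    dsimp only
    push_cast at hw
    omega
  · intro Q hQ
    rw [mem_coe, mem_loPartitions] at hQ
    rw [mem_coe, mem_filter, mem_loPartitions]
    obtain ⟨hQ, hw⟩ := hQ
    refine ⟨⟨hQ.insert hb hne, ?_⟩, mem_insert_self b Q⟩
    rw [partWeight_insert (hQ.notMem_of_sdiff hne)]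
    push_cast
    omega
  · intro P hP
    exact insert_erase (mem_filter.mp hP).2
  · intro Q hQ
    exact erase_insert ((mem_loPartitions.mp hQ).1.notMem_of_sdiff hne)

theorem card_loPartitions_succ (ℓ : ℤ) {S : Finset ℕ} (m : ℕ) {x : ℕ} (hx : x ∈ S) :
    #(loPartitions ℓ S (m + 1)) = ∑ b ∈ nodupLists S with x ∈ b,
      #(loPartitions (ℓ - blockWeight b) (S \ b.toFinset) m) := by
  have hfibers : loPartitions ℓ S (m + 1) = {b ∈ nodupLists S | x ∈ b}.biUnion
      fun b => {P ∈ loPartitions ℓ S (m + 1) | b ∈ P} := by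
    ext P
    simp only [mem_biUnion, mem_filter]
    refine ⟨fun hP => ?_, fun ⟨_, _, hP, _⟩ => hP⟩
    obtain ⟨b, hb, hxb⟩ := ((mem_loPartitions.mp hP).1.exists_mem_iff x).mpr hx
    exact ⟨b, ⟨(mem_loPartitions.mp hP).1.mem_nodupLists hb, hxb⟩, hP, hb⟩
  rw [hfibers, card_biUnion]
  · refine sum_congr rfl fun b hb => ?_
    obtain ⟨hbS, hxb⟩ := mem_filter.mp hb
    exact card_filter_mem_loPartitions ℓ m hbS (List.ne_nil_of_mem hxb)
  · intro b hb c hc hbc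
    simp only [Function.onFun, disjoint_left, mem_filter]
    rintro P ⟨hP, hbP⟩ ⟨-, hcP⟩
    exact hbc ((mem_loPartitions.mp hP).1.eq_of_mem hbP hcP
      (mem_filter.mp hb).2 (mem_filter.mp hc).2)

theorem blockWeight_cons_of_forall_lt {a : ℕ} {r : List ℕ} (ha : ∀ x ∈ r, a < x) :
    blockWeight (a :: r) = 0 := by
  rw [blockWeight, List.headI_cons, List.countP_eq_zero]
  intro x hx
  rcases List.mem_cons.mp hx with rfl | hx
  · simp
  · simpa using (ha x hx).le

theorem blockWeight_insertIdx_succ {a i : ℕ} {c : List ℕ} (ha : a < c.headI)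
    (hi : i + 1 ≤ c.length) : blockWeight (c.insertIdx (i + 1) a) = blockWeight c + 1 := by
  obtain ⟨x, t, rfl⟩ := List.exists_cons_of_length_pos (by omega : 0 < c.length)
  rw [List.headI_cons] at ha
  rw [blockWeight, blockWeight, List.insertIdx_succ_cons, List.headI_cons, List.headI_cons,
    List.countP_cons, List.countP_cons,
    ((List.perm_insertIdx a t (Nat.le_of_succ_le_succ hi)).countP_eq _), List.countP_cons]
  simp [ha]

theorem card_mul_card_loPartitions (ℓ : ℤ) (S : Finset ℕ) (m : ℕ) :
    #S * #(loPartitions ℓ S (m + 1)) = ∑ c ∈ nodupLists S,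
      c.length * #(loPartitions (ℓ - blockWeight c) (S \ c.toFinset) m) := by
  rw [← smul_eq_mul, ← sum_const, sum_congr rfl fun x hx => card_loPartitions_succ ℓ m hx,
    sum_comm' (t' := nodupLists S) (s' := fun c => {x ∈ S | x ∈ c})
      (by simp only [mem_filter]; tauto)]
  refine sum_congr rfl fun c hc => ?_
  obtain ⟨hcnd, hcS⟩ := mem_nodupLists.mp hc
  have hfilter : {x ∈ S | x ∈ c} = c.toFinset := by
    ext x
    simpa using hcS x
  rw [sum_const, hfilter, List.toFinset_card_of_nodup hcnd, smul_eq_mul]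

theorem card_loPartitions_insert (ℓ : ℤ) {S : Finset ℕ} (m : ℕ) {a : ℕ}
    (ha : ∀ x ∈ S, a < x) :
    #(loPartitions ℓ (insert a S) (m + 1)) = #S * #(loPartitions (ℓ - 1) S (m + 1)) +
      ∑ r ∈ nodupLists S, #(loPartitions ℓ (S \ r.toFinset) m) := by
  have haS : a ∉ S := fun h => lt_irrefl a (ha a h)
  rw [card_loPartitions_succ ℓ m (mem_insert_self a S), sum_filter_mem_nodupLists_insert haS,
    card_mul_card_loPartitions, ← sum_add_distrib]
  refine sum_congr rfl fun c hc => ?_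
  obtain ⟨hcnd, hcS⟩ := mem_nodupLists.mp hc
  have hsdiff : ∀ i ≤ c.length, insert a S \ (c.insertIdx i a).toFinset = S \ c.toFinset := by
    intro i hi
    ext x
    simp only [mem_sdiff, mem_insert, List.mem_toFinset, List.mem_insertIdx hi]
    constructor
    · rintro ⟨hx | hx, hxc⟩ <;> tauto
    · rintro ⟨hx, hxc⟩
      exact ⟨Or.inr hx, by rintro (rfl | h) <;> tauto⟩
  have hshift : ∀ i ∈ range c.length,
      #(loPartitions (ℓ - blockWeight (c.insertIdx (i + 1) a))
        (insert a S \ (c.insertIdx (i + 1) a).toFinset) m) =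
      #(loPartitions (ℓ - 1 - blockWeight c) (S \ c.toFinset) m) := by
    intro i hi
    have hi : i + 1 ≤ c.length := mem_range.mp hi
    have hhead : a < c.headI := by
      obtain ⟨x, t, rfl⟩ := List.exists_cons_of_length_pos (by omega : 0 < c.length)
      exact ha x (hcS x List.mem_cons_self)
    rw [hsdiff _ hi, blockWeight_insertIdx_succ hhead hi, Nat.cast_succ, sub_add_eq_sub_sub_swap]
  rw [sum_range_succ', sum_congr rfl hshift, sum_const, card_range, smul_eq_mul,
    hsdiff 0 (Nat.zero_le _), List.insertIdx_zero,
    blockWeight_cons_of_forall_lt fun x hx => ha x (hcS x hx), Nat.cast_zero, sub_zero]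

theorem card_loPartitions_insert_eq_weightedLah (ℓ : ℤ) {S : Finset ℕ} (m : ℕ) {a : ℕ}
    (ha : ∀ x ∈ S, a < x)
    (hS : ∀ ℓ m, ∀ T ⊆ S, #(loPartitions ℓ T m) = weightedLah ℓ #T m) :
    #(loPartitions ℓ (insert a S) (m + 1)) = #S * weightedLah (ℓ - 1) #S (m + 1) +
      ∑ j ∈ range (#S + 1), (#S).descFactorial j * weightedLah ℓ (#S - j) m := by
  rw [card_loPartitions_insert ℓ m ha, hS _ _ S Subset.rfl, ← sum_nodupLists_length]
  congr 1
  refine sum_congr rfl fun r hr => ?_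
  rw [hS _ _ _ sdiff_subset, card_sdiff_toFinset hr]

theorem card_loPartitions_eq_weightedLah (ℓ : ℤ) (S : Finset ℕ) (m : ℕ) :
    #(loPartitions ℓ S m) = weightedLah ℓ #S m := by
  induction hk : #S using Nat.strong_induction_on generalizing ℓ S m with
  | _ k ih =>
  rw [weightedLah_eq_card_loPartitions]
  rcases S.eq_empty_or_nonempty with rfl | hS
  · rw [← hk, card_empty, Icc_eq_empty_of_lt zero_lt_one]
  obtain ⟨k, rfl⟩ := Nat.exists_eq_add_one_of_ne_zero (hk ▸ hS.card_pos.ne')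
  have hbelow : ∀ X : Finset ℕ, #X = k →
      ∀ ℓ m, ∀ T ⊆ X, #(loPartitions ℓ T m) = weightedLah ℓ #T m :=
    fun X hX ℓ m T hT => ih _ (by have := card_le_card hT; omega) ℓ T m rfl
  cases m with
  | zero => rw [card_loPartitions_zero hS, card_loPartitions_zero (nonempty_Icc.mpr (by omega))]
  | succ m =>
    have hmin := S.min'_mem hS
    rw [← insert_erase hmin, ← Ioc_insert_left (by omega : 1 ≤ k + 1),
      card_loPartitions_insert_eq_weightedLah ℓ m (fun _ => S.min'_lt_of_mem_erase_min' hS)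
        (hbelow _ (by rw [card_erase_of_mem hmin, hk, Nat.add_sub_cancel])),
      card_loPartitions_insert_eq_weightedLah ℓ m (fun _ hx => (mem_Ioc.mp hx).1)
        (hbelow _ (by simp)),
      card_erase_of_mem hmin, hk, Nat.card_Ioc, Nat.add_sub_cancel]

theorem stmt_7_general (n m : ℕ) (hn : 2 ≤ n) (hm : 2 ≤ m) (ℓ : ℤ) :
    weightedLah ℓ n m =
      (n - 1) * weightedLah (ℓ - 1) (n - 1) m +
        ∑ j ∈ Finset.range n,
          (n - 1).choose j * j.factorial * weightedLah ℓ (n - 1 - j) (m - 1) := by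
  obtain ⟨n, rfl⟩ := Nat.exists_eq_add_one_of_ne_zero (by omega : n ≠ 0)
  obtain ⟨m, rfl⟩ := Nat.exists_eq_add_one_of_ne_zero (by omega : m ≠ 0)
  rw [weightedLah_eq_card_loPartitions, ← Ioc_insert_left (by omega : 1 ≤ n + 1),
    card_loPartitions_insert_eq_weightedLah ℓ m (fun _ hx => (mem_Ioc.mp hx).1)
      (fun ℓ m T _ => card_loPartitions_eq_weightedLah ℓ T m),
    Nat.card_Ioc, Nat.add_sub_cancel, Nat.add_sub_cancel]
  refine congrArg _ (sum_congr rfl fun j _ => ?_)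
  rw [Nat.descFactorial_eq_factorial_mul_choose, mul_comm j.factorial]

/-- the recurrence
`W(ℓ,n,m) = (n-1)·W(ℓ-1,n-1,m) + Σ_{j=0}^{n-1} C(n-1,j)·j!·W(ℓ,n-1-j,m-1)`. -/
theorem stmt_7 (n m : ℕ) (hn : 2 ≤ n) (hm : 2 ≤ m) (ℓ : ℤ) (hℓ : 0 ≤ ℓ) :
    weightedLah ℓ n m =
      (n - 1) * weightedLah (ℓ - 1) (n - 1) m +
        ∑ j ∈ Finset.range n,
          (n - 1).choose j * j.factorial * weightedLah ℓ (n - 1 - j) (m - 1) :=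
  stmt_7_general n m hn hm ℓ
end

section
/- For integers n ≥ m ≥ 1 and ℓ ≥ 0, one has m! · W(ℓ, n, m) = Σ_{(b_1,…,b_m)} (n! / (b_1 · b_2 ⋯ b_m)) · #{(j_1,…,j_m) ∈ ℤ^m : j_1 + ⋯ + j_m = ℓ and 0 ≤ j_i ≤ b_i − 1 for all i}, where the outer sum runs over all m-tuples (b_1,…,b_m) of positive integers with b_1 + ⋯ + b_m = n. -/
/-! Listing the blocks of a partition in each of the `m!` possible orders turns `m! · W(ℓ,n,m)`
into the number of `m`-tuples of linearly ordered blocks of weight `ℓ`; sort these tuples by the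
lengths `b` and weights `j` of their blocks. The weight of a block is the rank of its first entry
in the block, so among the `b_i!` orderings of a `b_i`-element set each weight `j_i < b_i` occurs
exactly `(b_i - 1)!` times. Hence the number of tuples with lengths `b` and weights `j` is the
same for every admissible `j`, namely `n! / (b_1 ⋯ b_m)`. -/

open Finset Polynomial

open scoped Nat

section Arrangements

variable {α : Type*} [DecidableEq α]

noncomputable def arrangements (s : Finset α) : Finset (List α) := s.toList.permutations.toFinset

theorem mem_arrangements {s : Finset α} {l : List α} :
    l ∈ arrangements s ↔ l.Nodup ∧ l.toFinset = s := by
  rw [arrangements, List.mem_toFinset, List.mem_permutations]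
  refine ⟨fun h => ⟨h.nodup_iff.2 s.nodup_toList, by rw [List.toFinset_eq_of_perm _ _ h,
    Finset.toList_toFinset]⟩, fun ⟨hl, hls⟩ => ?_⟩
  exact List.perm_of_nodup_nodup_toFinset_eq hl s.nodup_toList (by rw [hls, Finset.toList_toFinset])

theorem card_arrangements (s : Finset α) : #(arrangements s) = (#s)! := by
  rw [arrangements, List.toFinset_card_of_nodup (List.nodup_permutations _ s.nodup_toList),
    List.length_permutations, Finset.length_toList]

noncomputable def subArrangements (s : Finset α) : Finset (List α) :=
  s.powerset.biUnion arrangements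

theorem mem_subArrangements {s : Finset α} {l : List α} :
    l ∈ subArrangements s ↔ l.Nodup ∧ l.toFinset ⊆ s := by
  simp only [subArrangements, mem_biUnion, mem_powerset, mem_arrangements]
  exact ⟨fun ⟨_, hts, hl, hlt⟩ => ⟨hl, hlt ▸ hts⟩, fun ⟨hl, hls⟩ => ⟨_, hls, hl, rfl⟩⟩

noncomputable def blockTuples (s : Finset α) (m : ℕ) : Finset (Fin m → List α) :=
  {f ∈ Fintype.piFinset fun _ => subArrangements s | (List.ofFn f).flatten ∈ arrangements s}

theorem mem_blockTuples {s : Finset α} {m : ℕ} {f : Fin m → List α} :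
    f ∈ blockTuples s m ↔ (List.ofFn f).flatten ∈ arrangements s := by
  refine ⟨fun h => (mem_filter.1 h).2,
    fun h => mem_filter.2 ⟨Fintype.mem_piFinset.2 fun i => ?_, h⟩⟩
  obtain ⟨hnd, hs⟩ := mem_arrangements.1 h
  have hsub : (f i).Sublist (List.ofFn f).flatten :=
    List.sublist_flatten_of_mem (List.mem_ofFn.2 ⟨i, rfl⟩)
  refine mem_subArrangements.2 ⟨hnd.sublist hsub, hs ▸ fun x hx => ?_⟩
  exact List.mem_toFinset.2 (hsub.subset (List.mem_toFinset.1 hx))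

theorem mem_blockTuples_iff {s : Finset α} {m : ℕ} {f : Fin m → List α} :
    f ∈ blockTuples s m ↔ (∀ i, (f i).Nodup) ∧ (∀ i j, i ≠ j → (f i).Disjoint (f j)) ∧
      ∀ x, (∃ i, x ∈ f i) ↔ x ∈ s := by
  simp only [mem_blockTuples, mem_arrangements, List.nodup_flatten, List.pairwise_ofFn,
    List.mem_ofFn, forall_exists_index, forall_apply_eq_imp_iff, Finset.ext_iff, List.mem_toFinset,
    List.mem_flatten, exists_exists_eq_and, and_assoc]
  refine and_congr_right fun _ => and_congr_left fun _ =>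
    ⟨fun h i j hij => ?_, fun h i j hij => h i j hij.ne⟩
  rcases hij.lt_or_gt with hij | hij
  exacts [h hij, (h hij).symm]

theorem cons_mem_blockTuples {s : Finset α} {m : ℕ} {l : List α} {f : Fin m → List α} :
    Fin.cons l f ∈ blockTuples s (m + 1) ↔
      l ∈ subArrangements s ∧ f ∈ blockTuples (s \ l.toFinset) m := by
  simp only [mem_blockTuples, mem_arrangements, mem_subArrangements, List.ofFn_succ, Fin.cons_zero,
    Fin.cons_succ, List.flatten_cons, List.nodup_append, List.toFinset_append]
  generalize (List.ofFn f).flatten = r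
  constructor
  · rintro ⟨⟨hl, hr, hlr⟩, rfl⟩
    refine ⟨⟨hl, subset_union_left⟩, hr, ?_⟩
    ext x
    simp only [mem_sdiff, mem_union, List.mem_toFinset]
    exact ⟨fun hx => ⟨Or.inr hx, fun hxl => hlr x hxl x hx rfl⟩,
      fun ⟨hx, hxl⟩ => hx.resolve_left hxl⟩
  · rintro ⟨⟨hl, hls⟩, hr, hrs⟩
    refine ⟨⟨hl, hr, fun a ha b hb hab => ?_⟩, by rw [hrs, union_sdiff_of_subset hls]⟩
    have hb' := hrs ▸ List.mem_toFinset.2 hb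
    exact (mem_sdiff.1 hb').2 (List.mem_toFinset.2 (hab ▸ ha))

theorem injective_of_mem_blockTuples {s : Finset α} {m : ℕ} {f : Fin m → List α}
    (hf : f ∈ blockTuples s m) (hne : ∀ i, f i ≠ []) : Function.Injective f := fun i j hij => by
  by_contra h
  obtain ⟨x, hx⟩ := List.exists_mem_of_ne_nil _ (hne i)
  exact (mem_blockTuples_iff.1 hf).2.1 i j h hx (hij ▸ hx)

theorem sum_length_of_mem_blockTuples {s : Finset α} {m : ℕ} {f : Fin m → List α}
    (hf : f ∈ blockTuples s m) : ∑ i, (f i).length = #s := by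
  obtain ⟨hnd, hs⟩ := mem_arrangements.1 (mem_blockTuples.1 hf)
  rw [← hs, List.toFinset_card_of_nodup hnd, List.length_flatten, List.map_ofFn, List.sum_ofFn]
  rfl

end Arrangements

theorem card_injective_tuples_eq_factorial_mul {α : Type*} [DecidableEq α] {m : ℕ}
    {Q : Finset α → Prop} (hQ : ∀ P, Q P → #P = m) :
    Nat.card {f : Fin m → α // Function.Injective f ∧ Q (univ.image f)} =
      m ! * Nat.card {P // Q P} := by
  let image : {f : Fin m → α // Function.Injective f ∧ Q (univ.image f)} → {P // Q P} :=
    fun f => ⟨univ.image f.1, f.2.2⟩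
  have enumerations (P : {P // Q P}) : {f // image f = P} ≃ (Fin m ≃ P.1) :=
    { toFun := fun f => Equiv.ofBijective (fun i => ⟨f.1.1 i, by
          rw [← congrArg Subtype.val f.2]; exact mem_image_of_mem _ (mem_univ i)⟩)
        ((Fintype.bijective_iff_injective_and_card _).2
          ⟨fun i j h => f.1.2.1 (congrArg Subtype.val h), by simp [hQ P.1 P.2]⟩)
      invFun := fun e =>
        have himage : univ.image (fun i => (e i).1) = P.1 := by
          ext x
          simp only [mem_image, mem_univ, true_and]
          exact ⟨fun ⟨i, hi⟩ => hi ▸ (e i).2, fun hx => ⟨e.symm ⟨x, hx⟩, by simp⟩⟩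
        ⟨⟨fun i => (e i).1, fun i j h => e.injective (Subtype.ext h), by rw [himage]; exact P.2⟩,
          Subtype.ext himage⟩
      left_inv := fun f => rfl
      right_inv := fun e => Equiv.ext fun i => rfl }
  calc Nat.card {f : Fin m → α // Function.Injective f ∧ Q (univ.image f)}
      = Nat.card ({P // Q P} × Equiv.Perm (Fin m)) := Nat.card_congr <|
        (Equiv.sigmaFiberEquiv image).symm.trans <| Equiv.sigmaEquivProdOfEquiv fun P =>
          (enumerations P).trans <| Equiv.equivCongr (.refl _) (P.1.equivFinOfCardEq (hQ _ P.2))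
    _ = m ! * Nat.card {P // Q P} := by rw [Nat.card_prod, Nat.card_perm, Nat.card_fin, mul_comm]

theorem Finset.existsUnique_card_filter_lt_eq {β : Type*} [LinearOrder β] (s : Finset β) {r : ℕ}
    (hr : r < #s) : ∃! a, a ∈ s ∧ #{x ∈ s | x < a} = r := by
  set rank : β → ℕ := fun a => #{x ∈ s | x < a}
  have rank_lt {a b} (ha : a ∈ s) (hab : a < b) : rank a < rank b := by
    refine card_lt_card ((ssubset_iff_of_subset fun x hx => ?_).2 ⟨a, ?_, ?_⟩)
    all_goals simp_all [hab.trans']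
  have hinj : Set.InjOn rank s := fun a ha b hb hab => by
    by_contra hne
    rcases lt_or_gt_of_ne hne with h | h
    exacts [(rank_lt ha h).ne hab, (rank_lt hb h).ne' hab]
  have himage : s.image rank = range #s := eq_of_subset_of_card_le
    (fun _ h => by
      obtain ⟨a, ha, rfl⟩ := mem_image.1 h
      exact mem_range.2 ((card_lt_card ((ssubset_iff_of_subset (filter_subset _ s)).2
        ⟨a, ha, by simp⟩))))
    (by rw [card_image_of_injOn hinj, card_range])
  obtain ⟨a, ha, rfl⟩ := mem_image.1 (himage ▸ mem_range.2 hr)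
  exact ⟨a, ⟨ha, rfl⟩, fun b ⟨hb, hab⟩ => hinj hb ha hab⟩

theorem blockWeight_lt_length_s10 {l : List ℕ} (hl : l ≠ []) : blockWeight l < l.length := by
  obtain ⟨a, t, rfl⟩ := List.exists_cons_of_ne_nil hl
  rw [blockWeight, List.countP_cons]
  simpa using List.countP_le_length

theorem blockWeight_eq_card_filter_lt {l : List ℕ} (hl : l.Nodup) :
    blockWeight l = #{x ∈ l.toFinset | x < l.headI} := by
  rw [blockWeight, List.countP_eq_length_filter, ← List.toFinset_card_of_nodup (hl.filter _),
    List.toFinset_filter]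
  simp

/-- The weight of an arrangement is the rank of its first entry, so fixing the weight fixes the
first entry. -/
theorem card_arrangements_filter_blockWeight_eq (s : Finset ℕ) {r : ℕ} (hr : r < #s) :
    #{l ∈ arrangements s | blockWeight l = r} = (#s - 1)! := by
  obtain ⟨a, ⟨has, hrank⟩, hunique⟩ := s.existsUnique_card_filter_lt_eq hr
  have hcons :
      {l ∈ arrangements s | blockWeight l = r} = (arrangements (s.erase a)).image (a :: ·) := by
    ext l
    simp only [mem_filter, mem_image, mem_arrangements]
    constructor
    · rintro ⟨⟨hl, rfl⟩, hw⟩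
      obtain ⟨c, t, rfl⟩ := List.exists_cons_of_ne_nil (l := l) (by rintro rfl; simp at hr)
      obtain rfl : c = a :=
        hunique c ⟨by simp, by simpa [blockWeight_eq_card_filter_lt hl] using hw⟩
      refine ⟨t, ⟨(List.nodup_cons.1 hl).2, ?_⟩, rfl⟩
      rw [List.toFinset_cons, erase_insert (by simpa using (List.nodup_cons.1 hl).1)]
    · rintro ⟨t, ⟨ht, hts⟩, rfl⟩
      have hat : a ∉ t := by simp [← List.mem_toFinset, hts]
      have hs : (a :: t).toFinset = s := by rw [List.toFinset_cons, hts, insert_erase has]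
      refine ⟨⟨List.nodup_cons.2 ⟨hat, ht⟩, hs⟩, ?_⟩
      rw [blockWeight_eq_card_filter_lt (List.nodup_cons.2 ⟨hat, ht⟩), hs, List.headI_cons, hrank]
  rw [hcons, card_image_of_injective _ List.cons_injective, card_arrangements,
    card_erase_of_mem has]

noncomputable def weightedBlocks (s : Finset ℕ) (k r : ℕ) : Finset (List ℕ) :=
  {l ∈ subArrangements s | l.length = k ∧ blockWeight l = r}

theorem card_weightedBlocks (s : Finset ℕ) {k r : ℕ} (hrk : r < k) :
    #(weightedBlocks s k r) = (#s).choose k * (k - 1)! := by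
  have hmaps : ∀ l ∈ weightedBlocks s k r, l.toFinset ∈ s.powersetCard k := fun l hl => by
    obtain ⟨hl, hlen, -⟩ := mem_filter.1 hl
    obtain ⟨hnd, hls⟩ := mem_subArrangements.1 hl
    exact mem_powersetCard.2 ⟨hls, by rw [List.toFinset_card_of_nodup hnd, hlen]⟩
  rw [card_eq_sum_card_fiberwise hmaps, ← card_powersetCard, ← smul_eq_mul, ← sum_const]
  refine sum_congr rfl fun t ht => ?_
  obtain ⟨hts, htk⟩ := mem_powersetCard.1 ht
  rw [← htk, ← card_arrangements_filter_blockWeight_eq t (htk ▸ hrk)]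
  congr 1
  ext l
  simp only [weightedBlocks, mem_filter, mem_subArrangements, mem_arrangements]
  constructor
  · rintro ⟨⟨⟨hnd, -⟩, -, hw⟩, rfl⟩
    exact ⟨⟨hnd, rfl⟩, hw⟩
  · rintro ⟨⟨hnd, rfl⟩, hw⟩
    exact ⟨⟨⟨hnd, hts⟩, by rw [← List.toFinset_card_of_nodup hnd], hw⟩, rfl⟩

noncomputable def weightedBlockTuples (s : Finset ℕ) {m : ℕ} (b w : Fin m → ℕ) :
    Finset (Fin m → List ℕ) :=
  {f ∈ blockTuples s m | ∀ i, (f i).length = b i ∧ blockWeight (f i) = w i}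

theorem cons_mem_weightedBlockTuples {s : Finset ℕ} {m : ℕ} {b w : Fin (m + 1) → ℕ} {l : List ℕ}
    {f : Fin m → List ℕ} :
    Fin.cons l f ∈ weightedBlockTuples s b w ↔
      l ∈ weightedBlocks s (b 0) (w 0) ∧
        f ∈ weightedBlockTuples (s \ l.toFinset) (Fin.tail b) (Fin.tail w) := by
  simp only [weightedBlockTuples, weightedBlocks, mem_filter]
  simp only [cons_mem_blockTuples, Fin.forall_fin_succ, Fin.cons_zero, Fin.cons_succ, Fin.tail]
  tauto

theorem card_weightedBlockTuples_succ (s : Finset ℕ) {m : ℕ} (b w : Fin (m + 1) → ℕ) :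
    #(weightedBlockTuples s b w) = ∑ l ∈ weightedBlocks s (b 0) (w 0),
      #(weightedBlockTuples (s \ l.toFinset) (Fin.tail b) (Fin.tail w)) := by
  rw [← card_sigma]
  refine card_nbij' (fun f => ⟨f 0, Fin.tail f⟩) (fun p => Fin.cons p.1 p.2) (fun f hf => ?_)
    (fun p hp => ?_) (fun f _ => Fin.cons_self_tail f) (fun p _ => by simp)
  · rw [mem_coe, ← Fin.cons_self_tail f, cons_mem_weightedBlockTuples] at hf
    exact mem_sigma.2 hf
  · exact cons_mem_weightedBlockTuples.2 (mem_sigma.1 hp)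

theorem card_weightedBlockTuples_mul_prod {m : ℕ} (s : Finset ℕ) (b w : Fin m → ℕ)
    (hb : ∑ i, b i = #s) (hw : ∀ i, w i < b i) :
    #(weightedBlockTuples s b w) * ∏ i, b i = (#s)! := by
  induction m generalizing s with
  | zero =>
    obtain rfl : s = ∅ := card_eq_zero.1 (by simpa using hb.symm)
    simp [weightedBlockTuples, blockTuples, mem_arrangements, Fintype.piFinset]
  | succ m ih =>
    rw [Fin.sum_univ_succ] at hb
    have hrest : ∀ l ∈ weightedBlocks s (b 0) (w 0),
        #(weightedBlockTuples (s \ l.toFinset) (Fin.tail b) (Fin.tail w)) * ∏ i, Fin.tail b i =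
          (#s - b 0)! := fun l hl => by
      obtain ⟨hl, hlen, -⟩ := mem_filter.1 hl
      obtain ⟨hnd, hls⟩ := mem_subArrangements.1 hl
      have hcard : #(s \ l.toFinset) = #s - b 0 := by
        rw [card_sdiff_of_subset hls, List.toFinset_card_of_nodup hnd, hlen]
      exact hcard ▸ ih _ _ _ (by rw [hcard]; exact Nat.eq_sub_of_add_eq' hb) fun i => hw i.succ
    calc #(weightedBlockTuples s b w) * ∏ i, b i
        = ∑ l ∈ weightedBlocks s (b 0) (w 0), (#s - b 0)! * b 0 := by
          rw [card_weightedBlockTuples_succ, Fin.prod_univ_succ, sum_mul]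
          refine sum_congr rfl fun l hl => ?_
          rw [← hrest l hl]
          simp only [Fin.tail]
          ring
      _ = (#s)! := by
          rw [sum_const, card_weightedBlocks s (hw 0), smul_eq_mul,
            ← Nat.choose_mul_factorial_mul_factorial (show b 0 ≤ #s by omega),
            ← Nat.mul_factorial_pred (show b 0 ≠ 0 by grind)]
          ring

noncomputable def weightedLahTuples (s : Finset ℕ) (m ℓ : ℕ) : Finset (Fin m → List ℕ) :=
  {f ∈ blockTuples s m | (∀ i, f i ≠ []) ∧ ∑ i, blockWeight (f i) = ℓ}

theorem card_weightedLahTuples (s : Finset ℕ) (m ℓ : ℕ) :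
    #(weightedLahTuples s m ℓ) =
      ∑ b ∈ {b ∈ Fintype.piFinset fun _ : Fin m => Icc 1 #s | ∑ i, b i = #s},
        ∑ w ∈ {w ∈ Fintype.piFinset fun i => range (b i) | ∑ i, w i = ℓ},
          #(weightedBlockTuples s b w) := by
  have hlengths : ∀ f ∈ weightedLahTuples s m ℓ, (fun i => (f i).length) ∈
      {b ∈ Fintype.piFinset fun _ : Fin m => Icc 1 #s | ∑ i, b i = #s} := fun f hf => by
    obtain ⟨hf, hne, -⟩ := mem_filter.1 hf
    have hsum := sum_length_of_mem_blockTuples hf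
    refine mem_filter.2 ⟨Fintype.mem_piFinset.2 fun i => mem_Icc.2 ⟨?_, ?_⟩, hsum⟩
    · exact List.length_pos_iff.2 (hne i)
    · exact hsum ▸ single_le_sum (f := fun i => (f i).length) (fun _ _ => Nat.zero_le _)
        (mem_univ i)
  rw [card_eq_sum_card_fiberwise hlengths]
  refine sum_congr rfl fun b hb => ?_
  have hweights : ∀ f ∈ {f ∈ weightedLahTuples s m ℓ | (fun i => (f i).length) = b},
      (fun i => blockWeight (f i)) ∈ {w ∈ Fintype.piFinset fun i => range (b i) | ∑ i, w i = ℓ} :=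
    fun f hf => by
      obtain ⟨⟨-, hne, hw⟩, rfl⟩ := by simpa only [weightedLahTuples, mem_filter] using hf
      exact mem_filter.2
        ⟨Fintype.mem_piFinset.2 fun i => mem_range.2 (blockWeight_lt_length_s10 (hne i)), hw⟩
  rw [card_eq_sum_card_fiberwise hweights]
  refine sum_congr rfl fun w hw => congrArg card ?_
  obtain ⟨hb, -⟩ := mem_filter.1 hb
  obtain ⟨hw, hwℓ⟩ := mem_filter.1 hw
  ext f
  simp only [weightedLahTuples, weightedBlockTuples, mem_filter, funext_iff, forall_and]
  constructor
  · rintro ⟨⟨⟨hf, -⟩, hlen⟩, hwt⟩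
    exact ⟨hf, hlen, hwt⟩
  · rintro ⟨hf, hlen, hwt⟩
    have hpos i : 0 < (f i).length := hlen i ▸ (mem_Icc.1 (Fintype.mem_piFinset.1 hb i)).1
    exact ⟨⟨⟨hf, fun i => List.ne_nil_of_length_pos (hpos i), by simp only [hwt, hwℓ]⟩, hlen⟩, hwt⟩

theorem isLOPartition_image_iff {n m : ℕ} {f : Fin m → List ℕ} (hf : Function.Injective f) :
    IsLOPartition n m (univ.image f) ↔ (∀ i, f i ≠ []) ∧ f ∈ blockTuples (Icc 1 n) m := by
  simp only [IsLOPartition, card_image_of_injective _ hf, card_univ, Fintype.card_fin, true_and,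
    forall_mem_image, exists_mem_image, mem_univ, forall_const, hf.ne_iff, mem_blockTuples_iff,
    forall_and, true_and, List.Disjoint, and_assoc]

theorem factorial_mul_weightedLah (n m ℓ : ℕ) :
    m ! * weightedLah ℓ n m = #(weightedLahTuples (Icc 1 n) m ℓ) := by
  rw [weightedLah, ← card_injective_tuples_eq_factorial_mul fun P hP => hP.1.1,
    ← Nat.card_eq_finsetCard]
  refine Nat.card_congr (Equiv.subtypeEquivRight fun f => ?_)
  have partWeight_image (hf : Function.Injective f) :
      partWeight (univ.image f) = ∑ i, blockWeight (f i) :=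
    sum_image fun i _ j _ h => hf h
  rw [weightedLahTuples, mem_filter]
  constructor
  · rintro ⟨hf, hP, hw⟩
    obtain ⟨hne, hf'⟩ := (isLOPartition_image_iff hf).1 hP
    exact ⟨hf', hne, by rw [← partWeight_image hf]; exact_mod_cast hw⟩
  · rintro ⟨hf', hne, hw⟩
    have hf := injective_of_mem_blockTuples hf' hne
    exact ⟨hf, (isLOPartition_image_iff hf).2 ⟨hne, hf'⟩, by rw [partWeight_image hf, hw]⟩

theorem stmt_10_general (n m ℓ : ℕ) :
    (m.factorial : ℚ) * (weightedLah (ℓ : ℤ) n m : ℚ) =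
      ∑ b ∈ (Fintype.piFinset fun _ : Fin m => Finset.Icc 1 n).filter
          (fun b => ∑ i, b i = n),
        ((n.factorial : ℚ) / ∏ i, (b i : ℚ)) *
          (((Fintype.piFinset fun i => Finset.range (b i)).filter
            (fun j => ∑ i, j i = ℓ)).card : ℚ) := by
  have hn : #(Icc 1 n) = n := by simp
  rw [← Nat.cast_mul, factorial_mul_weightedLah, card_weightedLahTuples, hn, Nat.cast_sum]
  refine sum_congr rfl fun b hb => ?_
  obtain ⟨hb, hsum⟩ := mem_filter.1 hb
  have hprod : ∏ i, (b i : ℚ) ≠ 0 :=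
    prod_ne_zero_iff.2 fun i _ =>
      Nat.cast_ne_zero.2 (Nat.pos_iff_ne_zero.1 (mem_Icc.1 (Fintype.mem_piFinset.1 hb i)).1)
  rw [Nat.cast_sum, mul_comm, ← nsmul_eq_mul, ← sum_const]
  refine sum_congr rfl fun w hw => ?_
  rw [eq_div_iff hprod]
  have hcount := card_weightedBlockTuples_mul_prod (Icc 1 n) b w (hsum.trans hn.symm)
    fun i => mem_range.1 (Fintype.mem_piFinset.1 (mem_filter.1 hw).1 i)
  rw [hn] at hcount
  exact_mod_cast hcount

/-- `m!·W(ℓ,n,m)` as a sum over compositions `(b 0,…,b (m-1))` of `n`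
into `m` positive parts of `(n!/(b 0 ⋯ b (m-1)))` times the number of integer tuples
`(j 0,…,j (m-1))` with `Σ j i = ℓ` and `0 ≤ j i ≤ b i - 1`. -/
theorem stmt_10 (n m ℓ : ℕ) (hm : 1 ≤ m) (hmn : m ≤ n) :
    (m.factorial : ℚ) * (weightedLah (ℓ : ℤ) n m : ℚ) =
      ∑ b ∈ (Fintype.piFinset fun _ : Fin m => Finset.Icc 1 n).filter
          (fun b => ∑ i, b i = n),
        ((n.factorial : ℚ) / ∏ i, (b i : ℚ)) *
          (((Fintype.piFinset fun i => Finset.range (b i)).filter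
            (fun j => ∑ i, j i = ℓ)).card : ℚ) :=
  stmt_10_general n m ℓ
end

section
/- For integers n ≥ 1, 0 ≤ m ≤ n−1 and 0 ≤ j ≤ n−1, the (n−1−m)-th elementary symmetric function of the n−1 consecutive integers 1−j, 2−j, …, n−1−j (i.e., Σ over all (n−1−m)-element subsets of {1−j,…,n−1−j} of the product of their elements) equals Σ_{i=0}^{n−m−1} (−1)^i · ⟦j, j−i⟧ · ⟦n−j, m+1+i−j⟧, an equality of integers. -/
open Finset Polynomial

/-!
By Vieta, the elementary symmetric function is the coefficient of `X ^ m` in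
`∏_{x = 1-j}^{n-1-j} (X + x)`. Multiplied by `X`, this product becomes the falling factorial
`X (X-1) ⋯ (X-j+1)` times the rising factorial `X (X+1) ⋯ (X+n-j-1)`, whose coefficients are
signed and unsigned Stirling numbers of the first kind; the Cauchy product of the two
coefficient sequences, reindexed by `i = j - u`, is the right-hand side.
The cycle-counting `⟦a, b⟧` satisfies the Stirling recursion because a permutation of
`Fin (a + 1)` is `(0 p)` times a permutation of the other points: for `p = 0` the point `0` is
a new fixed point, otherwise it is inserted into the cycle through `p`.
-/

namespace Equiv.Perm

variable {α : Type*} [Fintype α] [DecidableEq α]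

def numCycles (σ : Perm α) : ℕ := Multiset.card σ.cycleType + (Fintype.card α - #σ.support)

theorem numCycles_one : numCycles (1 : Perm α) = Fintype.card α := by
  simp [numCycles]

theorem numCycles_pos [Nonempty α] (σ : Perm α) : 0 < numCycles σ := by
  rcases eq_or_ne σ 1 with rfl | hσ
  · simpa [numCycles_one] using Fintype.card_pos
  · exact Nat.lt_add_right _ (card_cycleType_pos.mpr hσ)

theorem numCycles_swap_mul_of_apply_eq_of_apply_eq {σ : Perm α} {x y : α} (hxy : x ≠ y)
    (hx : σ x = x) (hy : σ y = y) : numCycles (swap x y * σ) + 1 = numCycles σ := by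
  have hsupp : (swap x y).support = {x, y} := support_swap hxy
  have hdisj : (swap x y).Disjoint σ := by
    rw [disjoint_iff_disjoint_support, hsupp]
    simp [hx, hy]
  have hcard : #(swap x y * σ).support = #σ.support + 2 := by
    rw [hdisj.support_mul, card_union_of_disjoint (disjoint_iff_disjoint_support.mp hdisj), hsupp,
      card_pair hxy, add_comm]
  have hle := card_le_univ (swap x y * σ).support
  simp only [numCycles, hdisj.cycleType_mul, (isCycle_swap hxy).cycleType, hsupp, card_pair hxy,
    Multiset.card_add, Multiset.card_singleton] at hcard hle ⊢
  omega

theorem numCycles_swap_apply_mul {τ : Perm α} {x : α} (hx : τ x ≠ x) (hxx : τ (τ x) ≠ x) :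
    numCycles (swap x (τ x) * τ) = numCycles τ + 1 := by
  set c := τ.cycleOf x
  set r := τ * c⁻¹
  have hc : c.IsCycle := τ.isCycle_cycleOf hx
  have hcx : c x = τ x := τ.cycleOf_apply_self x
  have hcxx : c (c x) ≠ x := by rwa [hcx, τ.cycleOf_apply_apply_self]
  have hcr : c.Disjoint r :=
    (disjoint_mul_inv_of_mem_cycleFactorsFinset
      (cycleOf_mem_cycleFactorsFinset_iff.mpr (mem_support.mpr hx))).symm
  have hτ : τ = c * r := by rw [hcr.commute.eq]; exact (inv_mul_cancel_right τ c).symm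
  -- splitting `x` off `τ` only shortens the cycle `c` through `x`, which stays a cycle
  have hsplit : swap x (τ x) * τ = (swap x (c x) * c) * r := by rw [hcx, mul_assoc, ← hτ]
  have hc'r : (swap x (c x) * c).Disjoint r :=
    hcr.mono (by rw [support_swap_mul_eq c x hcxx]; exact sdiff_subset) le_rfl
  have hcycles : Multiset.card τ.cycleType = Multiset.card (swap x (τ x) * τ).cycleType := by
    rw [hsplit, hc'r.cycleType_mul, (hc.swap_mul (hcx ▸ hx) hcxx).cycleType, hτ,
      hcr.cycleType_mul, hc.cycleType]
    simp
  have hsupp : #(swap x (τ x) * τ).support + 1 = #τ.support := by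
    rw [support_swap_mul_eq τ x hxx, ← card_singleton x,
      card_sdiff_add_card_eq_card (singleton_subset_iff.mpr (mem_support.mpr hx))]
  have hle := card_le_univ τ.support
  simp only [numCycles, hcycles]
  omega

theorem numCycles_swap_mul_of_apply_eq {σ : Perm α} {a b : α} (hab : a ≠ b) (ha : σ a = a) :
    numCycles (swap a b * σ) + 1 = numCycles σ := by
  by_cases hb : σ b = b
  · exact numCycles_swap_mul_of_apply_eq_of_apply_eq hab ha hb
  set τ := swap a b * σ
  have hτa : τ a = b := by simp [τ, ha]
  have hσb : σ b ≠ a := fun h => hab (σ.injective (h.trans ha.symm)).symm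
  have hτb : τ b = σ b := by simp [τ, swap_apply_of_ne_of_ne hσb hb]
  have hσ : swap a (τ a) * τ = σ := by simp [τ, hτa, ← mul_assoc]
  rw [← numCycles_swap_apply_mul (x := a) (by rwa [hτa, ne_comm]) (by rwa [hτa, hτb]), hσ]

theorem numCycles_extendDomain {β : Type*} [Fintype β] [DecidableEq β] {p : β → Prop}
    [DecidablePred p] (f : α ≃ Subtype p) (g : Perm α) :
    numCycles (g.extendDomain f) = numCycles g + (Fintype.card β - Fintype.card α) := by
  have hαβ : Fintype.card α ≤ Fintype.card β :=
    (Fintype.card_congr f).trans_le (Fintype.card_subtype_le p)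
  have hg := card_le_univ g.support
  simp only [numCycles, cycleType_extendDomain, card_support_extend_domain]
  omega

theorem decomposeFin_symm_zero_eq_extendDomain {n : ℕ} (e : Perm (Fin n)) :
    decomposeFin.symm (0, e) = e.extendDomain (finSuccAboveEquiv 0) := by
  ext x
  refine Fin.cases ?_ (fun i => ?_) x
  · simp [decomposeFin_symm_apply_zero, extendDomain_apply_not_subtype]
  · rw [decomposeFin_symm_apply_succ]
    have : i.succ = (finSuccAboveEquiv 0 i : Fin (n + 1)) := by simp [finSuccAboveEquiv_apply]
    rw [this, extendDomain_apply_image]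
    simp [finSuccAboveEquiv_apply]

theorem numCycles_decomposeFin_symm {n : ℕ} (p : Fin (n + 1)) (e : Perm (Fin n)) :
    numCycles (decomposeFin.symm (p, e)) = numCycles e + if p = 0 then 1 else 0 := by
  have hzero : numCycles (decomposeFin.symm (0, e)) = numCycles e + 1 := by
    simp [decomposeFin_symm_zero_eq_extendDomain, numCycles_extendDomain]
  split_ifs with hp
  · rw [hp, hzero]
  · have hswap : decomposeFin.symm (p, e) = swap 0 p * decomposeFin.symm (0, e) := by
      ext x
      refine Fin.cases ?_ (fun i => ?_) x <;> simp [decomposeFin_symm_apply_succ]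
    have := numCycles_swap_mul_of_apply_eq (Ne.symm hp) (decomposeFin_symm_apply_zero 0 e)
    rw [hswap]
    omega

theorem card_numCycles_eq_succ (n b : ℕ) :
    Fintype.card {σ : Perm (Fin (n + 1)) // numCycles σ = b + 1} =
      n * Fintype.card {σ : Perm (Fin n) // numCycles σ = b + 1} +
        Fintype.card {σ : Perm (Fin n) // numCycles σ = b} := by
  rw [← Fintype.card_congr (decomposeFin.symm.subtypeEquiv fun _ => Iff.rfl),
    Fintype.card_congr (subtypeProdEquivSigmaSubtype fun p e =>
      numCycles (decomposeFin.symm (p, e)) = b + 1),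
    Fintype.card_sigma, Fin.sum_univ_succ]
  simp only [numCycles_decomposeFin_symm, if_pos, Fin.succ_ne_zero, if_false, add_zero,
    Nat.add_right_cancel_iff, sum_const, card_univ, Fintype.card_fin, smul_eq_mul]
  ring

end Equiv.Perm

theorem stirling1_eq_card (a b : ℕ) :
    stirling1 a b = Fintype.card {σ : Equiv.Perm (Fin a) // σ.numCycles = b} := by
  simp [stirling1, Equiv.Perm.numCycles, Nat.card_eq_fintype_card]

theorem stirling1_eq_stirlingFirst (a b : ℕ) : stirling1 a b = Nat.stirlingFirst a b := by
  induction a generalizing b with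
  | zero =>
    have h (σ : Equiv.Perm (Fin 0)) : σ.numCycles = 0 := by
      rw [Subsingleton.elim σ 1, Equiv.Perm.numCycles_one, Fintype.card_fin]
    cases b <;> simp [stirling1_eq_card, h]
  | succ a ih =>
    cases b with
    | zero =>
      simp [stirling1_eq_card, (Equiv.Perm.numCycles_pos _).ne']
    | succ b => rw [stirling1_eq_card, Equiv.Perm.card_numCycles_eq_succ, ← stirling1_eq_card,
        ← stirling1_eq_card, ih, ih, Nat.stirlingFirst_succ_succ]

theorem le_of_stirlingFirst_ne_zero {a b : ℕ} (h : Nat.stirlingFirst a b ≠ 0) : b ≤ a :=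
  not_lt.mp (mt Nat.stirlingFirst_eq_zero_of_lt h)

theorem stirlingZ_natCast (a b : ℕ) : stirlingZ a b = Nat.stirlingFirst a b := by
  simp [stirlingZ, stirling1_eq_stirlingFirst]

theorem stirlingZ_of_neg {a b : ℤ} (hb : b < 0) : stirlingZ a b = 0 := by
  simp [stirlingZ, hb.not_ge]

section FactorialPolynomials

variable {R : Type*}

theorem coeff_prod_range_X_add_C_mul [CommSemiring R] (c : R) (a b : ℕ) :
    (∏ i ∈ range a, (X + C (c * i))).coeff b = c ^ (a - b) * Nat.stirlingFirst a b := by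
  induction a generalizing b with
  | zero => cases b <;> simp [coeff_one]
  | succ a ih =>
    rw [prod_range_succ, mul_add, coeff_add, coeff_mul_C]
    cases b with
    | zero =>
      rw [coeff_mul_X_zero, ih, zero_add, Nat.stirlingFirst_succ_zero]
      cases a <;> simp [Nat.stirlingFirst_succ_zero]
    | succ b =>
      rw [coeff_mul_X, ih, ih, Nat.stirlingFirst_succ_succ]
      rcases Nat.lt_or_ge a (b + 1) with hab | hab
      · simp [Nat.stirlingFirst_eq_zero_of_lt hab]
      · obtain ⟨d, rfl⟩ := Nat.exists_eq_add_of_le hab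
        rw [show b + 1 + d + 1 - (b + 1) = d + 1 by omega, show b + 1 + d - (b + 1) = d by omega,
          show b + 1 + d - b = d + 1 by omega]
        push_cast
        ring

theorem coeff_prod_range_X_add_C [CommSemiring R] (a b : ℕ) :
    (∏ i ∈ range a, (X + C (i : R))).coeff b = (Nat.stirlingFirst a b : R) := by
  simpa using coeff_prod_range_X_add_C_mul (1 : R) a b

theorem coeff_prod_range_X_sub_C [CommRing R] (a b : ℕ) :
    (∏ i ∈ range a, (X - C (i : R))).coeff b = (-1) ^ (a - b) * (Nat.stirlingFirst a b : R) := by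
  simpa [← sub_eq_add_neg] using coeff_prod_range_X_add_C_mul (-1 : R) a b

end FactorialPolynomials

theorem X_mul_prod_Icc_one_X_add_C (k : ℕ) :
    X * ∏ x ∈ Icc (1 : ℤ) k, (X + C x) = ∏ l ∈ range (k + 1), (X + C (l : ℤ)) := by
  induction k with
  | zero => simp
  | succ k ih =>
    rw [prod_range_succ, ← ih, Nat.cast_succ, ← insert_Icc_right_eq_Icc_add_one (by omega),
      prod_insert (by simp)]
    ring

theorem X_mul_prod_Icc_X_add_C (j k : ℕ) :
    X * ∏ x ∈ Icc (1 - j : ℤ) k, (X + C x) =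
      (∏ l ∈ range j, (X - C (l : ℤ))) * ∏ l ∈ range (k + 1), (X + C (l : ℤ)) := by
  induction j with
  | zero => simpa using X_mul_prod_Icc_one_X_add_C k
  | succ j ih =>
    have hIcc : Icc (1 - ((j + 1 : ℕ) : ℤ)) k = insert (-(j : ℤ)) (Icc (1 - (j : ℤ)) k) := by
      ext x
      simp only [mem_Icc, mem_insert]
      omega
    rw [hIcc, prod_insert (by simp), prod_range_succ, C_neg, ← sub_eq_add_neg]
    linear_combination (X - C (j : ℤ)) * ih

theorem sum_antidiagonal_stirlingFirst_eq_sum_range (n m j : ℕ) (hj : j ≤ n) :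
    ∑ p ∈ antidiagonal (m + 1),
        (-1 : ℤ) ^ (j - p.1) * Nat.stirlingFirst j p.1 * Nat.stirlingFirst (n - j) p.2 =
      ∑ i ∈ range (n - m), (-1 : ℤ) ^ i * stirlingZ (j : ℤ) ((j : ℤ) - (i : ℤ)) *
        stirlingZ ((n : ℤ) - (j : ℤ)) ((m : ℤ) + 1 + (i : ℤ) - (j : ℤ)) := by
  have hterm {u v : ℕ} (huv : u + v = m + 1) (hu : u ≤ j) :
      (-1 : ℤ) ^ (j - u) * Nat.stirlingFirst j u * Nat.stirlingFirst (n - j) v =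
        (-1 : ℤ) ^ (j - u) * stirlingZ (j : ℤ) ((j : ℤ) - ((j - u : ℕ) : ℤ)) *
          stirlingZ ((n : ℤ) - (j : ℤ)) ((m : ℤ) + 1 + ((j - u : ℕ) : ℤ) - (j : ℤ)) := by
    rw [show (j : ℤ) - ((j - u : ℕ) : ℤ) = u by omega,
      show (m : ℤ) + 1 + ((j - u : ℕ) : ℤ) - j = v by omega,
      show (n : ℤ) - j = ((n - j : ℕ) : ℤ) by omega, stirlingZ_natCast, stirlingZ_natCast]
  have hsupp {p : ℕ × ℕ}
      (hne : (-1 : ℤ) ^ (j - p.1) * Nat.stirlingFirst j p.1 * Nat.stirlingFirst (n - j) p.2 ≠ 0) :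
      p.1 ≤ j ∧ p.2 ≤ n - j := by
    simp only [ne_eq, mul_eq_zero, not_or, Nat.cast_eq_zero] at hne
    exact ⟨le_of_stirlingFirst_ne_zero hne.1.2, le_of_stirlingFirst_ne_zero hne.2⟩
  refine sum_bij_ne_zero (fun p _ _ => j - p.1) ?_ ?_ ?_ ?_
  · intro p hp hne
    have := hsupp hne
    rw [HasAntidiagonal.mem_antidiagonal] at hp
    rw [mem_range]
    omega
  · intro p hp hne q hq hne' hpq
    have := hsupp hne
    have := hsupp hne'
    rw [HasAntidiagonal.mem_antidiagonal] at hp hq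
    ext <;> omega
  · intro i hi hne
    have hij : i ≤ j := by
      by_contra! h
      exact hne (by rw [stirlingZ_of_neg (b := (j : ℤ) - i) (by omega), mul_zero, zero_mul])
    have hji : j ≤ m + 1 + i := by
      by_contra! h
      exact hne (by rw [stirlingZ_of_neg (b := (m : ℤ) + 1 + i - j) (by omega), mul_zero])
    have hp : (j - i, m + 1 + i - j) ∈ antidiagonal (m + 1) := by
      rw [HasAntidiagonal.mem_antidiagonal]
      omega
    refine ⟨_, hp, ?_, by simp only; omega⟩
    rwa [hterm (HasAntidiagonal.mem_antidiagonal.mp hp) (by omega), show j - (j - i) = i by omega]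
  · intro p hp hne
    exact hterm (HasAntidiagonal.mem_antidiagonal.mp hp) (hsupp hne).1

/-- the `(n-1-m)`-th elementary symmetric function of the integers
`1-j, 2-j, …, n-1-j` expressed via unsigned Stirling numbers of the first kind. -/
theorem stmt_13 (n m j : ℕ) (hn : 1 ≤ n) (hm : m ≤ n - 1) (hj : j ≤ n - 1) :
    ∑ s ∈ (Finset.Icc ((1 : ℤ) - (j : ℤ)) ((n : ℤ) - 1 - (j : ℤ))).powersetCard (n - 1 - m),
        ∏ x ∈ s, x
      = ∑ i ∈ Finset.range (n - m),
          (-1 : ℤ) ^ i * stirlingZ (j : ℤ) ((j : ℤ) - (i : ℤ)) *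
            stirlingZ ((n : ℤ) - (j : ℤ)) ((m : ℤ) + 1 + (i : ℤ) - (j : ℤ)) := by
  have hcard : #(Icc ((1 : ℤ) - j) (n - 1 - j)) = n - 1 := by rw [Int.card_Icc]; omega
  have hupper : (n : ℤ) - 1 - j = ((n - 1 - j : ℕ) : ℤ) := by omega
  calc _ = (∏ x ∈ Icc ((1 : ℤ) - j) (n - 1 - j), (X + C x)).coeff m := by
        rw [prod_X_add_C_coeff _ (fun x => x) (by omega), hcard]
    _ = (X * ∏ x ∈ Icc ((1 : ℤ) - j) (n - 1 - j), (X + C x)).coeff (m + 1) := (coeff_X_mul ..).symm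
    _ = ((∏ l ∈ range j, (X - C (l : ℤ))) *
          ∏ l ∈ range (n - j), (X + C (l : ℤ))).coeff (m + 1) := by
        rw [hupper, X_mul_prod_Icc_X_add_C, show n - 1 - j + 1 = n - j by omega]
    _ = ∑ p ∈ antidiagonal (m + 1),
          (-1 : ℤ) ^ (j - p.1) * Nat.stirlingFirst j p.1 * Nat.stirlingFirst (n - j) p.2 := by
        simp only [coeff_mul, coeff_prod_range_X_sub_C, coeff_prod_range_X_add_C]
    _ = _ := sum_antidiagonal_stirlingFirst_eq_sum_range n m j (by omega)
end
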